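/- arXiv:2409.11082 — 7 statements merged into one kernel-verified Lean document; each statement's English description precedes it below -/
import Mathlib

section
/- Let α be a totally real algebraic integer such that 0 ≺ α ≺ 4, i.e., every conjugate of α over ℚ lies in the open real interval (0, 4). Then there exists a root of unity ζ such that α = (ζ + ζ⁻¹)² = 2 + ζ² + ζ⁻². -/
open Polynomial

set_option synthInstance.maxHeartbeats 400000
set_option maxHeartbeats 400000

set_option synthInstance.maxHeartbeats 1000000
set_option maxHeartbeats 2000000

noncomputable section

/-- `z : ℂ` is a totally real algebraic number: it is algebraic over `ℚ` and all of its
conjugates over `ℚ` (i.e. the complex roots of its minimal polynomial over `ℚ`) are real. -/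
def IsTotallyRealNum (z : ℂ) : Prop :=
  IsAlgebraic ℚ z ∧ ∀ w : ℂ, aeval w (minpoly ℚ z) = 0 → w.im = 0

/-- If `α` is a totally real algebraic integer all of whose conjugates over `ℚ` lie in the
open real interval `(0, 4)`, then there is a root of unity `ζ` with
`α = (ζ + ζ⁻¹)² = 2 + ζ² + ζ⁻²`. -/
theorem stmt_0 (α : ℂ) (hint : IsIntegral ℤ α) (htr : IsTotallyRealNum α)
    (hconj : ∀ w : ℂ, aeval w (minpoly ℚ α) = 0 → 0 < w.re ∧ w.re < 4) :
    ∃ ζ : ℂ, (∃ k : ℕ, 0 < k ∧ ζ ^ k = 1) ∧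
      α = (ζ + ζ⁻¹) ^ 2 ∧ α = 2 + ζ ^ 2 + (ζ ^ 2)⁻¹ := by
  obtain ⟨halg, him⟩ := htr
  -- pick a root ζ of X⁴ - (α-2)X² + 1
  have hdeg : (0 : WithBot ℕ) < (X ^ 4 - C (α - 2) * X ^ 2 + 1 : ℂ[X]).degree := by
    have h4 : (X ^ 4 - C (α - 2) * X ^ 2 + 1 : ℂ[X]).degree = 4 := by
      compute_degree!
    rw [h4]
    exact_mod_cast Nat.zero_lt_succ 3
  obtain ⟨ζ, hζroot⟩ := Complex.exists_root hdeg
  have hζ : ζ ^ 4 - (α - 2) * ζ ^ 2 + 1 = 0 := by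
    simpa using hζroot
  have hζ0 : ζ ≠ 0 := by
    rintro rfl; simp at hζ
  have hζ20 : ζ ^ 2 ≠ 0 := pow_ne_zero _ hζ0
  have hrel : α = 2 + ζ ^ 2 + (ζ ^ 2)⁻¹ := by
    field_simp
    linear_combination -hζ
  -- ζ is an algebraic integer
  have hζint : IsIntegral ℤ ζ := by
    set S := Algebra.adjoin ℤ ({α} : Set ℂ) with hS
    haveI : Algebra.IsIntegral ℤ S :=
      Algebra.IsIntegral.adjoin (by rintro x rfl; exact hint)
    have hαS : α ∈ S := Algebra.self_mem_adjoin_singleton ℤ α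
    have hζS : IsIntegral S ζ := by
      refine ⟨X ^ 4 - C (⟨α, hαS⟩ - 2) * X ^ 2 + 1, ?_, ?_⟩
      · monicity!
      · simp only [eval₂_add, eval₂_sub, eval₂_mul, eval₂_pow, eval₂_X, eval₂_one, eval₂_C,
          eval₂_ofNat, map_sub, map_ofNat]
        have : (algebraMap S ℂ) ⟨α, hαS⟩ = α := rfl
        rw [this]
        linear_combination hζ
    exact isIntegral_trans ζ hζS
  have hζQ : IsIntegral ℚ ζ := hζint.tower_top
  -- the number field K = ℚ(ζ)
  set K := IntermediateField.adjoin ℚ ({ζ} : Set ℂ) with hK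
  haveI : FiniteDimensional ℚ K := IntermediateField.adjoin.finiteDimensional hζQ
  haveI : NumberField K := ⟨⟩
  set ζK : K := IntermediateField.AdjoinSimple.gen ℚ ζ with hζK
  have hgen : algebraMap K ℂ ζK = ζ := IntermediateField.AdjoinSimple.algebraMap_gen ℚ ζ
  have hinj : Function.Injective (algebraMap K ℂ) := (algebraMap K ℂ).injective
  have hζKint : IsIntegral ℤ ζK :=
    (isIntegral_algebraMap_iff hinj).mp (by rwa [hgen])
  have hζK0 : ζK ≠ 0 := fun h => hζ0 (by rw [← hgen, h, map_zero])
  set αK : K := 2 + ζK ^ 2 + (ζK ^ 2)⁻¹ with hαK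
  have hαKmap : algebraMap K ℂ αK = α := by
    have h2 : algebraMap K ℂ αK = 2 + ζ ^ 2 + (ζ ^ 2)⁻¹ := by
      simp [hαK, map_add, map_inv₀, map_pow, hgen, map_ofNat]
    rw [h2, ← hrel]
  have hmin : minpoly ℚ αK = minpoly ℚ α := by
    rw [← hαKmap]
    exact (minpoly.algebraMap_eq hinj αK).symm
  -- relation in K
  have hrelK : ζK ^ 4 - (αK - 2) * ζK ^ 2 + 1 = 0 := by
    apply hinj
    push_cast [map_add, map_sub, map_mul, map_pow, map_one, map_zero, map_ofNat, hgen, hαKmap]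
    linear_combination hζ
  -- all conjugates of ζK have norm 1
  have key : ∀ φ : K →+* ℂ, ‖φ ζK‖ = 1 := by
    intro φ
    set ψ := φ.toRatAlgHom with hψ
    have hφψ : φ ζK = ψ ζK := rfl
    rw [hφψ]
    have hroot : aeval (ψ αK) (minpoly ℚ αK) = 0 := by
      rw [aeval_algHom_apply, minpoly.aeval, map_zero]
    rw [hmin] at hroot
    obtain ⟨h1, h2⟩ := hconj _ hroot
    have h3 := him _ hroot
    set a := ψ αK with ha
    set w : ℂ := ψ ζK with hw
    have hwrel : w ^ 4 - (a - 2) * w ^ 2 + 1 = 0 := by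
      have := congrArg ψ hrelK
      simpa [map_sub, map_add, map_mul, map_pow, map_one, map_zero, map_ofNat, ← hw, ← ha]
        using this
    have hw0 : w ≠ 0 := by
      rintro h; rw [h] at hwrel; norm_num at hwrel
    set u : ℂ := w ^ 2 with hu
    have hurel : u ^ 2 - (a - 2) * u + 1 = 0 := by
      rw [hu]; ring_nf; ring_nf at hwrel; linear_combination hwrel
    have hu0 : u ≠ 0 := pow_ne_zero _ hw0
    set c : ℝ := a.re - 2 with hc
    have hac : a - 2 = (c : ℂ) := by
      rw [hc, Complex.ext_iff]; simp [h3]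
    rw [hac] at hurel
    -- split into re and im parts
    have hre : u.re ^ 2 - u.im ^ 2 - c * u.re + 1 = 0 := by
      have := congrArg Complex.re hurel
      simpa [pow_two, Complex.mul_re, Complex.mul_im] using this
    have hirm : 2 * u.re * u.im - c * u.im = 0 := by
      have := congrArg Complex.im hurel
      simp [pow_two, Complex.mul_re, Complex.mul_im] at this
      linarith
    have huim : u.im ≠ 0 := by
      intro h0
      rw [h0] at hre
      have hr0 : u.re ≠ 0 := by
        intro h; exact hu0 (Complex.ext h h0)
      have hcb : -2 < c ∧ c < 2 := by constructor <;> [linarith; linarith]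
      rcases lt_trichotomy u.re 0 with hr | hr | hr
      · nlinarith [sq_nonneg (u.re + 1)]
      · exact hr0 hr
      · nlinarith [sq_nonneg (u.re - 1)]
    have hceq : c = 2 * u.re := by
      have h' : (2 * u.re) * u.im = c * u.im := by linarith [hirm]
      exact (mul_right_cancel₀ huim h').symm
    have hnorm1 : u.re ^ 2 + u.im ^ 2 = 1 := by nlinarith [hre, hceq]
    have hnu : ‖u‖ = 1 := by
      have : ‖u‖ ^ 2 = 1 := by
        rw [Complex.sq_norm, Complex.normSq_apply]
        nlinarith [hnorm1]
      nlinarith [norm_nonneg u]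
    have : ‖w‖ ^ 2 = 1 := by rw [← norm_pow, ← hu, hnu]
    nlinarith [norm_nonneg w]
  obtain ⟨n, hn, hpow⟩ := NumberField.Embeddings.pow_eq_one_of_norm_eq_one K ℂ hζKint key
  refine ⟨ζ, ⟨n, hn, ?_⟩, ?_, hrel⟩
  · have := congrArg (algebraMap K ℂ) hpow
    rwa [map_pow, map_one, hgen] at this
  · rw [hrel]; field_simp; ring

end
end

section
/- Let K be a totally real field, let m ≥ 0 be an integer, and let s, t be odd integers such that g(s/(2^m·t))² ∈ K. Then either g(s/(2^m·t)) ∈ K, or g(1/2^m)·g(s/(2^m·t)) ∈ K. -/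
open Polynomial

set_option synthInstance.maxHeartbeats 400000
set_option maxHeartbeats 400000

noncomputable section

/-- `g a = e^{2πia} + e^{-2πia} = 2 cos (2πa)`. -/
def g (a : ℚ) : ℂ :=
  Complex.exp (2 * Real.pi * Complex.I * (a : ℂ)) +
    Complex.exp (-(2 * Real.pi * Complex.I * (a : ℂ)))

lemma my_g_neg (b : ℚ) : g (-b) = g b := by
  rw [g, g]
  push_cast
  ring_nf

lemma my_g_add_int (b : ℚ) (k : ℤ) : g (b + k) = g b := by
  rw [g, g]
  have h1 : 2 * (Real.pi:ℂ) * Complex.I * ((b:ℂ) + (k:ℂ)) =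
      2 * (Real.pi:ℂ) * Complex.I * (b:ℂ) + (k:ℂ) * (2 * (Real.pi:ℂ) * Complex.I) := by ring
  have h2 : -(2 * (Real.pi:ℂ) * Complex.I * ((b:ℂ) + (k:ℂ))) =
      -(2 * (Real.pi:ℂ) * Complex.I * (b:ℂ)) + ((-k : ℤ):ℂ) * (2 * (Real.pi:ℂ) * Complex.I) := by
    push_cast; ring
  push_cast
  rw [h2, h1, Complex.exp_add, Complex.exp_add, Complex.exp_int_mul_two_pi_mul_I,
    Complex.exp_int_mul_two_pi_mul_I, mul_one, mul_one]

lemma my_g_mul (b c : ℚ) : g b * g c = g (b + c) + g (b - c) := by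
  rw [g, g, g, g]
  have h1 : 2 * (Real.pi:ℂ) * Complex.I * (((b+c : ℚ)):ℂ) =
      2 * (Real.pi:ℂ) * Complex.I * (b:ℂ) + 2 * (Real.pi:ℂ) * Complex.I * (c:ℂ) := by
    push_cast; ring
  have h2 : 2 * (Real.pi:ℂ) * Complex.I * (((b-c : ℚ)):ℂ) =
      2 * (Real.pi:ℂ) * Complex.I * (b:ℂ) - 2 * (Real.pi:ℂ) * Complex.I * (c:ℂ) := by
    push_cast; ring
  rw [h1, h2]
  simp only [neg_add, neg_sub, Complex.exp_add, Complex.exp_sub, Complex.exp_neg, sub_eq_add_neg]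
  field_simp [Complex.exp_ne_zero]
  ring

lemma my_g_zero : g 0 = 2 := by
  norm_num [g]

lemma my_chain (K : Subfield ℂ) (a : ℚ) (h : g a ^ 2 ∈ K) :
    ∀ n : ℕ, g (2 * (n:ℚ) * a) ∈ K ∧ ∃ k ∈ K, g ((2 * (n:ℚ) + 1) * a) = g a * k := by
  intro n
  induction n with
  | zero =>
    constructor
    · have h0 : (2:ℚ) * (0:ℕ) * a = 0 := by norm_num
      rw [h0, my_g_zero]
      exact_mod_cast K.add_mem K.one_mem K.one_mem
    · refine ⟨1, K.one_mem, ?_⟩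
      have h0 : (2 * ((0:ℕ):ℚ) + 1) * a = a := by norm_num
      rw [h0, mul_one]
  | succ n ih =>
    obtain ⟨h1, k, hk, hgk⟩ := ih
    have key1 : g a * g ((2 * (n:ℚ) + 1) * a) = g (2 * ((n:ℚ)+1) * a) + g (2 * (n:ℚ) * a) := by
      have e := my_g_mul a ((2 * (n:ℚ) + 1) * a)
      rw [show a + (2 * (n:ℚ) + 1) * a = 2 * ((n:ℚ)+1) * a from by ring,
        show a - (2 * (n:ℚ) + 1) * a = -(2 * (n:ℚ) * a) from by ring, my_g_neg] at e
      exact e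
    have heven : g (2 * ((n:ℚ)+1) * a) = g a ^ 2 * k - g (2 * (n:ℚ) * a) := by
      linear_combination -key1 + g a * hgk
    have hmem : g (2 * ((n:ℚ)+1) * a) ∈ K := by
      rw [heven]; exact K.sub_mem (K.mul_mem h hk) h1
    have hcast : ((n+1 : ℕ):ℚ) = (n:ℚ) + 1 := by push_cast; ring
    rw [hcast]
    refine ⟨hmem, g (2 * ((n:ℚ)+1) * a) - k, K.sub_mem hmem hk, ?_⟩
    have key2 : g a * g (2 * ((n:ℚ)+1) * a) =
        g ((2 * ((n:ℚ)+1) + 1) * a) + g ((2 * (n:ℚ) + 1) * a) := by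
      have e := my_g_mul a (2 * ((n:ℚ)+1) * a)
      rw [show a + 2 * ((n:ℚ)+1) * a = (2 * ((n:ℚ)+1) + 1) * a from by ring,
        show a - 2 * ((n:ℚ)+1) * a = -((2 * (n:ℚ) + 1) * a) from by ring, my_g_neg] at e
      exact e
    linear_combination -key2 - hgk

lemma my_exists_j (s N B : ℤ) (hs : Odd s) (h2 : 2 ∣ B) (hd : (Int.gcd s N : ℤ) ∣ B) :
    ∃ j : ℤ, N ∣ 2 * s * j - B := by
  set d : ℤ := (Int.gcd s N : ℤ) with hdd
  have hds : d ∣ s := Int.gcd_dvd_left s N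
  have hdodd : ¬ (2:ℤ) ∣ d := by
    intro h2d
    have : (2:ℤ) ∣ s := h2d.trans hds
    rw [Int.odd_iff] at hs
    omega
  have hcop : IsCoprime (2:ℤ) d := (Int.prime_two.coprime_iff_not_dvd).mpr hdodd
  obtain ⟨w, hw⟩ := h2
  have hdw : d ∣ w := by
    have : d ∣ 2 * w := by rw [← hw]; exact hd
    exact (hcop.symm.dvd_of_dvd_mul_left this)
  have hwd : d * (w / d) = w := Int.mul_ediv_cancel' hdw
  have hbez : (d:ℤ) = s * Int.gcdA s N + N * Int.gcdB s N := Int.gcd_eq_gcd_ab s N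
  refine ⟨Int.gcdA s N * (w / d), ⟨-2 * Int.gcdB s N * (w / d), ?_⟩⟩
  linear_combination (-2*(w/d)) * hbez + 2 * hwd - hw

lemma my_g_div_congr (A B N : ℤ) (hN : (N:ℚ) ≠ 0) (h : N ∣ A - B ∨ N ∣ A + B) :
    g ((A:ℚ) / (N:ℚ)) = g ((B:ℚ) / (N:ℚ)) := by
  rcases h with ⟨c, hc⟩ | ⟨c, hc⟩
  · have hA : (A:ℚ) = (B:ℚ) + (N:ℚ) * (c:ℚ) := by
      exact_mod_cast (show A = B + N * c by linarith)
    have hkey : (A:ℚ) / (N:ℚ) = (B:ℚ) / (N:ℚ) + ((c:ℤ):ℚ) := by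
      rw [hA]; field_simp
    rw [hkey, my_g_add_int]
  · have hA : (A:ℚ) = -(B:ℚ) + (N:ℚ) * (c:ℚ) := by
      exact_mod_cast (show A = -B + N * c by linarith)
    have hkey : (A:ℚ) / (N:ℚ) = -((B:ℚ) / (N:ℚ)) + ((c:ℤ):ℚ) := by
      rw [hA]; field_simp
    rw [hkey, my_g_add_int, my_g_neg]

/-- Let `K` be a totally real field, `m ≥ 0`, and `s, t` odd integers with
`g(s/(2^m t))² ∈ K`. Then `g(s/(2^m t)) ∈ K` or `g(1/2^m)·g(s/(2^m t)) ∈ K`. -/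
theorem stmt_3 (K : Subfield ℂ) (hK : ∀ x : ↥K, IsTotallyRealNum ↑x)
    (m : ℕ) (s t : ℤ) (hs : Odd s) (ht : Odd t)
    (h : g ((s : ℚ) / (2 ^ m * (t : ℚ))) ^ 2 ∈ K) :
    g ((s : ℚ) / (2 ^ m * (t : ℚ))) ∈ K ∨
      g (1 / 2 ^ m) * g ((s : ℚ) / (2 ^ m * (t : ℚ))) ∈ K := by
  right
  set a : ℚ := (s : ℚ) / (2 ^ m * (t : ℚ)) with ha
  set N : ℤ := 2 ^ m * t with hNdef
  have ht0' : t ≠ 0 := by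
    rintro rfl
    rw [Int.odd_iff] at ht
    omega
  have ht0 : (t:ℚ) ≠ 0 := Int.cast_ne_zero.mpr ht0'
  have hNq : ((N:ℤ):ℚ) = 2 ^ m * (t:ℚ) := by rw [hNdef]; push_cast; ring
  have hN0 : ((N:ℤ):ℚ) ≠ 0 := by
    rw [hNq]
    exact mul_ne_zero (by positivity) ht0
  have hds : (Int.gcd s N : ℤ) ∣ s := Int.gcd_dvd_left s N
  have hdodd : ¬ (2:ℤ) ∣ (Int.gcd s N : ℤ) := by
    intro h2d
    have h2s : (2:ℤ) ∣ s := h2d.trans hds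
    rw [Int.odd_iff] at hs
    omega
  have hdt : (Int.gcd s N : ℤ) ∣ t := by
    have h1 : (Int.gcd s N : ℤ) ∣ (2:ℤ) ^ m * t := hNdef ▸ (Int.gcd_dvd_right s N : (Int.gcd s N : ℤ) ∣ N)
    have hcop : IsCoprime ((2:ℤ) ^ m) ((Int.gcd s N : ℤ)) :=
      IsCoprime.pow_left ((Int.prime_two.coprime_iff_not_dvd).mpr hdodd)
    exact hcop.symm.dvd_of_dvd_mul_left h1
  have h2' := hs
  have h2'' := ht
  rw [Int.odd_iff] at h2' h2''
  obtain ⟨j₁, hj₁⟩ := my_exists_j s N (s + t) hs (by omega) (dvd_add hds hdt)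
  obtain ⟨j₂, hj₂⟩ := my_exists_j s N (t - s) hs (by omega) (dvd_sub hdt hds)
  have main : ∀ (n : ℕ) (B : ℤ),
      (N ∣ 2 * (n:ℤ) * s - B ∨ N ∣ 2 * (n:ℤ) * s + B) → g ((B:ℚ) / ((N:ℤ):ℚ)) ∈ K := by
    intro n B hnB
    have hmem := (my_chain K a h n).1
    have harg : 2 * (n:ℚ) * a = ((2 * (n:ℤ) * s : ℤ):ℚ) / ((N:ℤ):ℚ) := by
      rw [ha, hNq]; push_cast; ring
    rw [harg] at hmem
    have hcong := my_g_div_congr (2 * (n:ℤ) * s) B N hN0 hnB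
    exact hcong ▸ hmem
  have dis : ∀ (j B : ℤ), N ∣ 2 * s * j - B →
      (N ∣ 2 * (j.natAbs:ℤ) * s - B ∨ N ∣ 2 * (j.natAbs:ℤ) * s + B) := by
    intro j B hj
    rcases Int.natAbs_eq j with hj' | hj'
    · left
      have he : 2 * (j.natAbs : ℤ) * s - B = 2 * s * j - B := by rw [← hj']; ring
      rw [he]; exact hj
    · right
      have hn : (j.natAbs : ℤ) = -j := by omega
      have he : 2 * (j.natAbs : ℤ) * s + B = -(2 * s * j - B) := by rw [hn]; ring
      rw [he]; exact hj.neg_right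
  have em1 := main j₁.natAbs (s + t) (dis j₁ (s + t) hj₁)
  have em2 := main j₂.natAbs (t - s) (dis j₂ (t - s) hj₂)
  have hyt : (1:ℚ) / 2 ^ m = (t:ℚ) / ((N:ℤ):ℚ) := by
    rw [hNq]; field_simp
  have haq : a = (s:ℚ) / ((N:ℤ):ℚ) := by rw [ha, hNq]
  have hprod := my_g_mul ((t:ℚ) / ((N:ℤ):ℚ)) ((s:ℚ) / ((N:ℤ):ℚ))
  rw [show (t:ℚ) / ((N:ℤ):ℚ) + (s:ℚ) / ((N:ℤ):ℚ) = ((s + t : ℤ):ℚ) / ((N:ℤ):ℚ) from by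
        push_cast; ring,
      show (t:ℚ) / ((N:ℤ):ℚ) - (s:ℚ) / ((N:ℤ):ℚ) = ((t - s : ℤ):ℚ) / ((N:ℤ):ℚ) from by
        push_cast; ring] at hprod
  rw [hyt, haq, hprod]
  exact K.add_mem em1 em2

end
end

section
/- Let K be a totally real field. Then either g(1/2^m) ∈ K for all integers m ≥ 0, or there exists a unique integer m > 0 such that g(1/2^m)² ∈ K but g(1/2^m) ∉ K. -/
open Polynomial

set_option synthInstance.maxHeartbeats 400000
set_option maxHeartbeats 400000

noncomputable section

lemma expsq (z : ℂ) : (Complex.exp z + Complex.exp (-z)) ^ 2 =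
    Complex.exp (2 * z) + Complex.exp (-(2 * z)) + 2 := by
  rw [add_sq, pow_two, pow_two, ← Complex.exp_add, ← Complex.exp_add, mul_assoc,
    ← Complex.exp_add, add_neg_cancel, Complex.exp_zero,
    show (2 : ℂ) * z = z + z from two_mul z, show -(z + z) = -z + -z from neg_add z z]
  ring

lemma gsq (a : ℚ) : g a ^ 2 = g (2 * a) + 2 := by
  unfold g
  push_cast
  rw [expsq]
  ring_nf

lemma gkey (n : ℕ) : g (1 / 2 ^ (n + 1)) ^ 2 = g (1 / 2 ^ n) + 2 := by
  rw [gsq]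
  congr 2
  rw [pow_succ]
  ring

lemma g_one : g 1 = 2 := by
  unfold g
  push_cast
  rw [mul_one, Complex.exp_two_pi_mul_I, Complex.exp_neg, Complex.exp_two_pi_mul_I]
  norm_num

/-- Let `K` be a totally real field. Either `g(1/2^m) ∈ K` for all integers `m ≥ 0`, or
there is a unique integer `m > 0` with `g(1/2^m)² ∈ K` and `g(1/2^m) ∉ K`. -/
theorem stmt_4 (K : Subfield ℂ) (hK : ∀ x : ↥K, IsTotallyRealNum ↑x) :
    (∀ m : ℕ, g (1 / 2 ^ m) ∈ K) ∨
      (∃! m : ℕ, 0 < m ∧ g (1 / 2 ^ m) ^ 2 ∈ K ∧ g (1 / 2 ^ m) ∉ K) := by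
  classical
  have h2K : (2 : ℂ) ∈ K := by
    rw [← one_add_one_eq_two]; exact K.add_mem K.one_mem K.one_mem
  -- downward closure
  have hdown : ∀ n : ℕ, g (1 / 2 ^ (n + 1)) ∈ K → g (1 / 2 ^ n) ∈ K := by
    intro n h
    have h2 : g (1 / 2 ^ (n + 1)) ^ 2 ∈ K := pow_mem h 2
    rw [gkey] at h2
    have := K.sub_mem h2 (h2K)
    simpa using this
  -- square membership characterization
  have hsq : ∀ n : ℕ, (g (1 / 2 ^ (n + 1)) ^ 2 ∈ K ↔ g (1 / 2 ^ n) ∈ K) := by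
    intro n
    rw [gkey]
    constructor
    · intro h; simpa using K.sub_mem h (h2K)
    · intro h; exact K.add_mem h (h2K)
  by_cases h : ∀ m : ℕ, g (1 / 2 ^ m) ∈ K
  · exact Or.inl h
  · right
    push_neg at h
    set m := Nat.find h with hm
    have hmnot : g (1 / 2 ^ m) ∉ K := Nat.find_spec h
    have hmin : ∀ k < m, g (1 / 2 ^ k) ∈ K := by
      intro k hk
      by_contra hc
      have : m ≤ k := Nat.find_le hc
      omega
    have hm0 : 0 < m := by
      rcases Nat.eq_zero_or_pos m with h0 | h0
      · exfalso
        apply hmnot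
        rw [h0]
        simp only [pow_zero]
        norm_num [g_one]
      · exact h0
    -- complement upward closed
    have hup : ∀ k, m ≤ k → g (1 / 2 ^ k) ∉ K := by
      intro k hk
      induction k with
      | zero => omega
      | succ n ih =>
        rcases Nat.lt_or_ge m (n + 1) with h1 | h1
        · intro hc
          exact ih (by omega) (hdown n hc)
        · have : m = n + 1 := by omega
          rw [← this]; exact hmnot
    refine ⟨m, ⟨hm0, ?_, hmnot⟩, ?_⟩
    · obtain ⟨n, hmn⟩ : ∃ n, m = n + 1 := ⟨m - 1, by omega⟩
      rw [hmn, hsq]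
      exact hmin n (by omega)
    · rintro m' ⟨hm'0, hm'sq, hm'not⟩
      obtain ⟨n', rfl⟩ : ∃ n, m' = n + 1 := ⟨m' - 1, by omega⟩
      rw [hsq] at hm'sq
      have h1 : n' < m := by
        by_contra hc
        exact hup n' (by omega) hm'sq
      have h2 : m ≤ n' + 1 := Nat.find_le hm'not
      omega

end
end

section
/- Let K be a totally real field and let α ∈ O_K with 0 ≺ α ≺ 4, set β = 4 − α, and assume α ∉ K^{×2}. If β ∈ K^{×2}, then β ∈ O_K^{×2}, i.e., β is the square of a unit of O_K. -/
open Polynomial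

set_option synthInstance.maxHeartbeats 400000
set_option maxHeartbeats 400000

noncomputable section

private lemma aux_sum_pair (η : ℂ) (h : ℕ) :
    (1 + η) * ∑ k ∈ Finset.range h, (η ^ 2) ^ k = ∑ j ∈ Finset.range (2 * h), η ^ j := by
  induction h with
  | zero => simp
  | succ h ih =>
    rw [Finset.sum_range_succ, mul_add, ih,
      show 2 * (h + 1) = (2 * h) + 1 + 1 by ring,
      Finset.sum_range_succ, Finset.sum_range_succ]
    ring

/-- If `ζ^m = 1` with `m` odd and `ζ^2 ≠ 1`, then `(ζ + ζ⁻¹)⁻¹` is an algebraic integer. -/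
private lemma aux_inv_integral_of_odd (ζ : ℂ) (m : ℕ) (hm : Odd m) (h1 : ζ ^ m = 1)
    (h2 : ζ ^ 2 ≠ 1) : IsIntegral ℤ (ζ + ζ⁻¹)⁻¹ := by
  have hm0 : 0 < m := hm.pos
  have hζ0 : ζ ≠ 0 := by
    intro h
    rw [h, zero_pow hm0.ne'] at h1
    exact zero_ne_one h1
  have hζint : IsIntegral ℤ ζ := by
    refine IsIntegral.of_pow hm0 ?_
    rw [h1]; exact isIntegral_one
  set η := ζ ^ 2 with hη
  have hηm : η ^ m = 1 := by rw [hη, ← pow_mul, mul_comm, pow_mul, h1, one_pow]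
  have hηne : η ≠ 1 := h2
  obtain ⟨h, hh⟩ : ∃ h : ℕ, m + 1 = 2 * h := by
    obtain ⟨r, hr⟩ := hm
    exact ⟨r + 1, by omega⟩
  set g := ∑ k ∈ Finset.range h, (η ^ 2) ^ k with hg
  have hkey : (1 + η) * g = 1 := by
    rw [hg, aux_sum_pair, ← hh, Finset.sum_range_succ, hηm, geom_sum_eq hηne, hηm]
    simp
  have hmul : (ζ + ζ⁻¹) * (ζ * g) = 1 := by
    have : (ζ + ζ⁻¹) * (ζ * g) = (1 + η) * g := by
      field_simp [hη]
      ring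
    rw [this, hkey]
  rw [inv_eq_of_mul_eq_one_right hmul]
  have : ζ * g ∈ integralClosure ℤ ℂ := by
    refine mul_mem (hζint : ζ ∈ integralClosure ℤ ℂ) (Subalgebra.sum_mem _ fun k _ => ?_)
    exact pow_mem (pow_mem (pow_mem (hζint : ζ ∈ integralClosure ℤ ℂ) 2) 2) k
  exact this

/-- Chebyshev/Dickson-type closure: `ζ^k + ζ⁻¹^k` lies in any subfield containing `ζ + ζ⁻¹`. -/
private lemma aux_pow_add_inv_pow_mem (K : Subfield ℂ) (ζ : ℂ) (hζ0 : ζ ≠ 0)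
    (hx : ζ + ζ⁻¹ ∈ K) : ∀ k : ℕ, ζ ^ k + (ζ⁻¹) ^ k ∈ K := by
  have key : ∀ k : ℕ, ζ ^ k + (ζ⁻¹) ^ k ∈ K ∧ ζ ^ (k + 1) + (ζ⁻¹) ^ (k + 1) ∈ K := by
    intro k
    induction k with
    | zero =>
      refine ⟨by simpa using K.add_mem K.one_mem K.one_mem, by simpa using hx⟩
    | succ k ih =>
      refine ⟨ih.2, ?_⟩
      have hid : ζ ^ (k + 2) + (ζ⁻¹) ^ (k + 2) =
          (ζ + ζ⁻¹) * (ζ ^ (k + 1) + (ζ⁻¹) ^ (k + 1)) - (ζ ^ k + (ζ⁻¹) ^ k) := by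
        have h1 : ζ * ζ⁻¹ = 1 := mul_inv_cancel₀ hζ0
        linear_combination (-(ζ ^ k + ζ⁻¹ ^ k)) * h1
      rw [hid]
      exact K.sub_mem (K.mul_mem hx ih.2) ih.1
  exact fun k => (key k).1

/-- Let `K` be a totally real field, `α ∈ O_K` with `0 ≺ α ≺ 4` (all conjugates of `α` lie in
the open interval `(0,4)`), and `β = 4 − α`. If `α ∉ K^{×2}` but `β ∈ K^{×2}`, then `β` is the
square of a unit of `O_K`. -/
theorem stmt_5 (K : Subfield ℂ) (hK : ∀ x : ↥K, IsTotallyRealNum ↑x)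
    (α : ℂ) (hαK : α ∈ K) (hint : IsIntegral ℤ α)
    (hconj : ∀ w : ℂ, aeval w (minpoly ℚ α) = 0 → 0 < w.re ∧ w.re < 4)
    (hα : ¬ ∃ x ∈ K, x ≠ 0 ∧ α = x ^ 2)
    (hβ : ∃ x ∈ K, x ≠ 0 ∧ 4 - α = x ^ 2) :
    ∃ u : ℂ, u ∈ K ∧ u ≠ 0 ∧ IsIntegral ℤ u ∧ IsIntegral ℤ u⁻¹ ∧ 4 - α = u ^ 2 := by
  classical
  obtain ⟨x, hxK, hx0, hx2⟩ := hβ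
  -- basic facts about α
  have hαQ : IsIntegral ℚ α := hint.tower_top
  have hαroot : aeval α (minpoly ℚ α) = 0 := minpoly.aeval ℚ α
  have hαre := hconj α hαroot
  have hαne : α ≠ 0 := by
    intro h
    rw [h] at hαre
    simp at hαre
  -- basic facts about x
  have h4 : IsIntegral ℤ (4 : ℂ) := by
    simpa using isIntegral_algebraMap (R := ℤ) (A := ℂ) (x := 4)
  have hx2int : IsIntegral ℤ (x ^ 2) := by
    rw [← hx2]; exact h4.sub hint
  have hxint : IsIntegral ℤ x := hx2int.of_pow two_pos
  have hxQ : IsIntegral ℚ x := hxint.tower_top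
  have hxim : x.im = 0 := (hK ⟨x, hxK⟩).2 x (minpoly.aeval ℚ x)
  have hxeq : x = (x.re : ℂ) := Complex.ext (by simp) (by simp [hxim])
  have hre4 : x.re ^ 2 + α.re = 4 := by
    have h := congrArg Complex.re hx2
    rw [Complex.sub_re] at h
    have h2 : (x ^ 2).re = x.re ^ 2 := by
      rw [pow_two, Complex.mul_re, hxim]
      ring
    rw [h2] at h
    have h4re : ((4 : ℂ)).re = 4 := by norm_num
    rw [h4re] at h
    linarith
  -- construct ζ on the unit circle with ζ + ζ⁻¹ = x
  set t : ℝ := Real.sqrt α.re with htdef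
  have ht2 : (t : ℝ) ^ 2 = α.re := Real.sq_sqrt hαre.1.le
  set ζ : ℂ := ((x.re : ℂ) + Complex.I * (t : ℂ)) / 2 with hζdef
  have h1c : ((t : ℂ)) ^ 2 = ((α.re : ℝ) : ℂ) := by exact_mod_cast congrArg Complex.ofReal ht2
  have h2c : ((x.re : ℝ) : ℂ) ^ 2 + ((α.re : ℝ) : ℂ) = 4 := by exact_mod_cast hre4
  have hI : (Complex.I) ^ 2 = -1 := Complex.I_sq
  have hquad : ζ ^ 2 - x * ζ + 1 = 0 := by
    rw [hζdef]
    linear_combination ((t : ℂ) ^ 2 / 4) * hI - (1 / 4 : ℂ) * h1c - (1 / 4 : ℂ) * h2c -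
      ((((x.re : ℝ) : ℂ) + Complex.I * (t : ℂ)) / 2) * hxeq
  have hζ0 : ζ ≠ 0 := by
    intro h
    rw [h] at hquad
    simp at hquad
  have hζx : ζ + ζ⁻¹ = x := by
    field_simp
    linear_combination hquad
  -- ζ is an algebraic integer
  have hζint : IsIntegral ℤ ζ := by
    have hxA : x ∈ integralClosure ℤ ℂ := hxint
    have hA : IsIntegral (integralClosure ℤ ℂ) ζ := by
      refine ⟨X ^ 2 + (C (-(⟨x, hxA⟩ : integralClosure ℤ ℂ)) * X + C 1), ?_, ?_⟩
      · exact monic_X_pow_add (lt_of_le_of_lt degree_linear_le (by norm_num))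
      · have hcast : (algebraMap (integralClosure ℤ ℂ) ℂ) (⟨x, hxA⟩ : integralClosure ℤ ℂ) = x :=
          rfl
        simp only [aeval_def, eval₂_add, eval₂_mul, eval₂_pow, eval₂_X, eval₂_C, eval₂_one,
          eval₂_neg, map_neg, map_one, hcast]
        linear_combination hquad
    exact isIntegral_trans ζ hA
  have hζQ : IsIntegral ℚ ζ := hζint.tower_top
  -- Kronecker: ζ is a root of unity
  have hζroots : ∃ n : ℕ, 0 < n ∧ ζ ^ n = 1 := by
    let F := IntermediateField.adjoin ℚ ({ζ} : Set ℂ)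
    haveI : FiniteDimensional ℚ F := IntermediateField.adjoin.finiteDimensional hζQ
    haveI : NumberField F := ⟨⟩
    set g : F := IntermediateField.AdjoinSimple.gen ℚ ζ with hgdef
    have hg : (algebraMap F ℂ) g = ζ := IntermediateField.AdjoinSimple.algebraMap_gen ℚ ζ
    have hinj : Function.Injective (algebraMap F ℂ) := (algebraMap F ℂ).injective
    have hgint : IsIntegral ℤ g := by
      rw [← isIntegral_algebraMap_iff hinj, hg]
      exact hζint
    have hg0 : g ≠ 0 := by
      intro h
      apply hζ0
      rw [← hg, h, map_zero]
    set e : F := g + g⁻¹ with hedef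
    have hecoe : (algebraMap F ℂ) e = x := by
      rw [hedef, map_add, map_inv₀, hg, hζx]
    have halgmap : ∀ (z : F) (p : ℚ[X]),
        (algebraMap F ℂ) (aeval z p) = aeval ((algebraMap F ℂ) z) p :=
      fun z p => (aeval_algHom_apply (IsScalarTower.toAlgHom ℚ F ℂ) z p).symm
    have heroot : aeval e (minpoly ℚ x) = 0 := by
      apply hinj
      rw [map_zero, halgmap, hecoe]
      exact minpoly.aeval ℚ x
    have hα4 : α = 4 - x ^ 2 := by linear_combination -hx2
    have heαroot : aeval ((4 : F) - e ^ 2) (minpoly ℚ α) = 0 := by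
      apply hinj
      rw [map_zero, halgmap]
      have : (algebraMap F ℂ) ((4 : F) - e ^ 2) = α := by
        rw [map_sub, map_pow, hecoe, map_ofNat, hα4]
      rw [this]
      exact minpoly.aeval ℚ α
    have hquadF : g ^ 2 - e * g + 1 = 0 := by
      rw [hedef]
      field_simp
      ring
    have hnorm : ∀ φ : F →+* ℂ, ‖φ g‖ = 1 := by
      intro φ
      have hφaeval : ∀ (z : F) (p : ℚ[X]), aeval z p = 0 → aeval (φ z) p = 0 := by
        intro z p hp
        have := Polynomial.aeval_algHom_apply φ.toRatAlgHom z p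
        rw [hp, map_zero] at this
        rw [← this]
        rfl
      set w := φ g with hwdef
      set x' := φ e with hx'def
      have hx'root : aeval x' (minpoly ℚ x) = 0 := hφaeval e _ heroot
      have hx'im : x'.im = 0 := (hK ⟨x, hxK⟩).2 x' hx'root
      have hα'root : aeval (φ ((4 : F) - e ^ 2)) (minpoly ℚ α) = 0 := hφaeval _ _ heαroot
      have hα're := hconj _ hα'root
      have hrel : φ ((4 : F) - e ^ 2) = 4 - x' ^ 2 := by
        rw [map_sub, map_pow, map_ofNat]
      rw [hrel] at hα're
      have hre' : (4 - x' ^ 2).re = 4 - x'.re ^ 2 := by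
        rw [Complex.sub_re, pow_two, Complex.mul_re, hx'im]
        norm_num
        ring
      rw [hre'] at hα're
      have hb : x'.re ^ 2 < 4 := by linarith [hα're.1]
      have hwquad : w ^ 2 - x' * w + 1 = 0 := by
        have := congrArg φ hquadF
        rw [map_zero, map_add, map_sub, map_pow, map_mul, map_one] at this
        exact this
      have hx'real : x' = (x'.re : ℂ) := Complex.ext (by simp) (by simp [hx'im])
      have hwim : w.im ≠ 0 := by
        intro h0
        have hwre : w = (w.re : ℂ) := Complex.ext (by simp) (by simp [h0])
        rw [hwre, hx'real] at hwquad
        have : (w.re : ℝ) ^ 2 - x'.re * w.re + 1 = 0 := by exact_mod_cast hwquad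
        nlinarith [sq_nonneg (w.re - x'.re / 2), sq_nonneg x'.re]
      have hcx' : (starRingEnd ℂ) x' = x' := Complex.conj_eq_iff_im.mpr hx'im
      have hcquad : ((starRingEnd ℂ) w) ^ 2 - x' * ((starRingEnd ℂ) w) + 1 = 0 := by
        have := congrArg (starRingEnd ℂ) hwquad
        rw [map_zero, map_add, map_sub, map_pow, map_mul, map_one, hcx'] at this
        exact this
      have hwne : w - (starRingEnd ℂ) w ≠ 0 := by
        intro h
        exact hwim (Complex.conj_eq_iff_im.mp (by linear_combination -h))
      have hsum : w + (starRingEnd ℂ) w = x' := by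
        have hfac : (w - (starRingEnd ℂ) w) * (w + (starRingEnd ℂ) w - x') = 0 := by
          linear_combination hwquad - hcquad
        rcases mul_eq_zero.mp hfac with h | h
        · exact absurd h hwne
        · linear_combination h
      have hprod : w * (starRingEnd ℂ) w = 1 := by
        linear_combination w * hsum - hwquad
      have hnsq : Complex.normSq w = 1 := by
        have := Complex.mul_conj w
        rw [hprod] at this
        exact_mod_cast this.symm
      rw [Complex.norm_def, hnsq, Real.sqrt_one]
    obtain ⟨n, hn, hgn⟩ :=
      NumberField.Embeddings.pow_eq_one_of_norm_eq_one F ℂ hgint hnorm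
    refine ⟨n, hn, ?_⟩
    have := congrArg (algebraMap F ℂ) hgn
    rw [map_pow, hg, map_one] at this
    exact this
  -- minimal order of ζ
  have hζ2ne : ζ ^ 2 ≠ 1 := by
    intro h2
    have hinv : ζ⁻¹ = ζ := inv_eq_of_mul_eq_one_right (by linear_combination h2)
    have hx4 : x ^ 2 = 4 := by
      rw [← hζx, hinv]
      linear_combination 4 * h2
    exact hαne (by linear_combination -hx2 - hx4)
  set n₀ := Nat.find hζroots with hn₀def
  have hn₀ : 0 < n₀ ∧ ζ ^ n₀ = 1 := Nat.find_spec hζroots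
  rcases Nat.even_or_odd n₀ with heven | hodd
  · obtain ⟨m, hm⟩ := heven
    have hm0 : 0 < m := by omega
    have hmlt : m < n₀ := by omega
    have hζm : ζ ^ m ≠ 1 := fun h => (Nat.find_min hζroots hmlt) ⟨hm0, h⟩
    have hζm2 : (ζ ^ m) ^ 2 = 1 := by
      rw [← pow_mul, show m * 2 = n₀ by omega]
      exact hn₀.2
    have hζmneg : ζ ^ m = -1 := by
      have hfac : (ζ ^ m - 1) * (ζ ^ m + 1) = 0 := by linear_combination hζm2
      rcases mul_eq_zero.mp hfac with h | h
      · exact absurd (by linear_combination h) hζm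
      · linear_combination h
    rcases Nat.even_or_odd m with hmeven | hmodd
    · -- 4 ∣ n₀ : α is a square in K, contradiction
      obtain ⟨c, hc⟩ := hmeven
      have hc0 : 0 < c := by omega
      set v := ζ ^ c with hvdef
      have hv2 : v ^ 2 = -1 := by
        rw [hvdef, ← pow_mul, show c * 2 = m by omega]
        exact hζmneg
      have hv0 : v ≠ 0 := by
        intro h
        rw [h] at hv2
        norm_num at hv2
      have hvinv : v⁻¹ = -v := inv_eq_of_mul_eq_one_right (by linear_combination -hv2)
      set s := ζ ^ (c + 1) + (ζ⁻¹) ^ (c + 1) with hsdef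
      have hsK : s ∈ K :=
        aux_pow_add_inv_pow_mem K ζ hζ0 (by rw [hζx]; exact hxK) (c + 1)
      have hsv : s = v * (ζ - ζ⁻¹) := by
        rw [hsdef, inv_pow, pow_succ, mul_inv, ← hvdef, hvinv]
        field_simp
        ring
      have hs2 : s ^ 2 = α := by
        have hα4 : α = 4 - (ζ + ζ⁻¹) ^ 2 := by
          rw [hζx]
          linear_combination -hx2
        rw [hsv, mul_pow, hv2, hα4]
        field_simp
        ring
      have hsne : s ≠ 0 := by
        intro h
        apply hαne
        rw [← hs2, h]
        ring
      exact absurd ⟨s, hsK, hsne, hs2.symm⟩ hα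
  
    · -- m odd: -ζ has odd order, x is a unit
      have h1 : (-ζ) ^ m = 1 := by
        rw [hmodd.neg_pow, hζmneg]
        ring
      have h2 : (-ζ) ^ 2 ≠ 1 := by
        rw [neg_pow]
        simpa using hζ2ne
      have hinv := aux_inv_integral_of_odd (-ζ) m hmodd h1 h2
      have hrw : -ζ + (-ζ)⁻¹ = -x := by
        rw [inv_neg, ← hζx]
        ring
      rw [hrw, inv_neg] at hinv
      have hxinvint : IsIntegral ℤ x⁻¹ := by simpa using hinv.neg
      exact ⟨x, hxK, hx0, hxint, hxinvint, hx2⟩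
  · have hinv := aux_inv_integral_of_odd ζ n₀ hodd hn₀.2 hζ2ne
    rw [hζx] at hinv
    exact ⟨x, hxK, hx0, hxint, hinv, hx2⟩

end
end

section
/- There exist infinitely many positive integers n with n ≡ 1 (mod 12) such that n(n+1), 3n(3n+4), and (3n+3)(3n+4) are all squarefree integers. -/
open Finset

/-- Lower bound: number of `n < x` with `n ≡ 1 (mod 12)`. -/
private lemma countA (x : ℕ) :
    x / 12 ≤ ((Finset.range x).filter (fun n => n % 12 = 1)).card := by
  calc x / 12 = (Finset.range (x / 12)).card := (Finset.card_range _).symm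
    _ ≤ _ := by
        apply Finset.card_le_card_of_injOn (fun k => 12 * k + 1)
        · intro k hk
          simp only [Finset.mem_coe, Finset.mem_range] at hk
          simp only [Finset.mem_coe, Finset.mem_filter, Finset.mem_range]
          omega
        · intro a _ b _ hab
          simp only at hab
          omega

/-- Upper bound for a set of naturals below `x` whose pairwise differences are
divisible by `m`. -/
private lemma countUpper (x m : ℕ) (hm : 0 < m) (S : Finset ℕ) (hS : ∀ n ∈ S, n < x)
    (hd : ∀ a ∈ S, ∀ b ∈ S, a ≤ b → m ∣ b - a) : S.card ≤ x / m + 1 := by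
  have key : ∀ a ∈ S, ∀ b ∈ S, a < b → a / m < b / m := by
    intro a ha b hb hab
    have h1 : m ∣ b - a := hd a ha b hb hab.le
    have h2 : m ≤ b - a := Nat.le_of_dvd (by omega) h1
    have : (a + m) / m ≤ b / m := Nat.div_le_div_right (by omega)
    rw [Nat.add_div_right _ hm] at this
    omega
  calc S.card ≤ (Finset.range (x / m + 1)).card := by
        apply Finset.card_le_card_of_injOn (fun n => n / m)
        · intro n hn
          simp only [Finset.mem_coe, Finset.mem_range]
          have := Nat.div_le_div_right (c := m) (hS n hn).le
          omega
        · intro a ha b hb hab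
          simp only at hab
          rcases lt_trichotomy a b with h | h | h
          · exact absurd hab (key a ha b hb h).ne
          · exact h
          · exact absurd hab.symm (key b hb a ha h).ne
    _ = x / m + 1 := Finset.card_range _

/-- Splitting `p² ∣ a·b` when `p` does not divide both factors. -/
private lemma sq_dvd_split {p a b : ℕ} (hp : p.Prime) (h : p * p ∣ a * b)
    (hnot : ¬(p ∣ a ∧ p ∣ b)) : p * p ∣ a ∨ p * p ∣ b := by
  by_cases ha : p ∣ a
  · left
    have hb : ¬ p ∣ b := fun hb => hnot ⟨ha, hb⟩
    have hco : Nat.Coprime (p * p) b :=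
      Nat.Coprime.mul ((hp.coprime_iff_not_dvd).2 hb) ((hp.coprime_iff_not_dvd).2 hb)
    exact (Nat.Coprime.dvd_of_dvd_mul_right hco h)
  · right
    have hco : Nat.Coprime (p * p) a :=
      Nat.Coprime.mul ((hp.coprime_iff_not_dvd).2 ha) ((hp.coprime_iff_not_dvd).2 ha)
    exact Nat.Coprime.dvd_of_dvd_mul_left hco h

/-- Mod facts for `n ≡ 1 (mod 12)`. -/
private lemma mod_facts (n : ℕ) (h : n % 12 = 1) :
    (n * (n + 1)) % 4 = 2 ∧ (n * (n + 1)) % 3 = 2 ∧ (3 * n * (3 * n + 4)) % 2 = 1 ∧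
      (3 * n * (3 * n + 4)) % 9 = 3 ∧ ((3 * n + 3) * (3 * n + 4)) % 4 = 2 ∧
      ((3 * n + 3) * (3 * n + 4)) % 9 = 6 := by
  refine ⟨?_, ?_, ?_, ?_, ?_, ?_⟩
  · have h1 : n % 4 = 1 := by omega
    have h2 : (n + 1) % 4 = 2 := by omega
    rw [Nat.mul_mod, h1, h2]
  · have h1 : n % 3 = 1 := by omega
    have h2 : (n + 1) % 3 = 2 := by omega
    rw [Nat.mul_mod, h1, h2]
  · have h1 : (3 * n) % 2 = 1 := by omega
    have h2 : (3 * n + 4) % 2 = 1 := by omega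
    rw [Nat.mul_mod, h1, h2]
  · have h1 : (3 * n) % 9 = 3 := by omega
    have h2 : (3 * n + 4) % 9 = 7 := by omega
    rw [Nat.mul_mod, h1, h2]
  · have h1 : (3 * n + 3) % 4 = 2 := by omega
    have h2 : (3 * n + 4) % 4 = 3 := by omega
    rw [Nat.mul_mod, h1, h2]
  · have h1 : (3 * n + 3) % 9 = 6 := by omega
    have h2 : (3 * n + 4) % 9 = 7 := by omega
    rw [Nat.mul_mod, h1, h2]

/-- Telescoping bound on sum of `1/(2j+5)²`. -/
private lemma sum_inv_sq (z : ℕ) :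
    ∑ j ∈ Finset.range z, (1 : ℝ) / ((2 * j + 5 : ℕ) : ℝ) ^ 2 ≤ 1 / 8 := by
  have h1 : ∀ j ∈ Finset.range z,
      (1 : ℝ) / ((2 * j + 5 : ℕ) : ℝ) ^ 2 ≤
        (1 / 4) * ((1 : ℝ) / (j + 2) - 1 / (j + 3)) := by
    intro j _
    have hj : (0 : ℝ) ≤ (j : ℝ) := Nat.cast_nonneg j
    have heq : (1 / 4) * ((1 : ℝ) / (j + 2) - 1 / (j + 3)) =
        1 / (4 * ((j : ℝ) + 2) * ((j : ℝ) + 3)) := by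
      field_simp
      ring
    rw [heq]
    apply one_div_le_one_div_of_le
    · positivity
    · push_cast
      nlinarith
  calc ∑ j ∈ Finset.range z, (1 : ℝ) / ((2 * j + 5 : ℕ) : ℝ) ^ 2
      ≤ ∑ j ∈ Finset.range z, (1 / 4) * ((1 : ℝ) / (j + 2) - 1 / (j + 3)) :=
        Finset.sum_le_sum h1
    _ = (1 / 4) * ∑ j ∈ Finset.range z, ((1 : ℝ) / (j + 2) - 1 / (j + 3)) := by
        rw [Finset.mul_sum]
    _ = (1 / 4) * ((1 : ℝ) / 2 - 1 / (z + 2)) := by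
        rw [show (fun j : ℕ => (1 : ℝ) / (j + 2) - 1 / (j + 3)) =
          (fun j : ℕ => (fun k : ℕ => (1 : ℝ) / (k + 2)) j - (fun k : ℕ => (1 : ℝ) / (k + 2)) (j + 1)) from ?_]
        · rw [Finset.sum_range_sub' (fun k : ℕ => (1 : ℝ) / (k + 2)) z]
          norm_num
        · funext j
          push_cast
          ring_nf
    _ ≤ 1 / 8 := by
        have : (0:ℝ) < (z:ℝ) + 2 := by positivity
        have : (0:ℝ) ≤ 1 / ((z:ℝ) + 2) := by positivity
        linarith

private lemma prime_ge_five {p : ℕ} (hp : p.Prime) (h2 : p ≠ 2) (h3 : p ≠ 3) : 5 ≤ p := by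
  have := hp.two_le
  have h4 : p ≠ 4 := by rintro rfl; norm_num at hp
  omega

private lemma bad_split (n : ℕ) (h12 : n % 12 = 1)
    (hQ : ¬(Squarefree (n * (n + 1)) ∧ Squarefree (3 * n * (3 * n + 4)) ∧
      Squarefree ((3 * n + 3) * (3 * n + 4)))) :
    ∃ p, p.Prime ∧ 5 ≤ p ∧ (p * p ∣ n ∨ p * p ∣ (n + 1) ∨ p * p ∣ (3 * n + 4)) := by
  obtain ⟨m1, m2, m3, m4, m5, m6⟩ := mod_facts n h12
  rw [not_and_or, not_and_or] at hQ
  have key : ∀ m : ℕ, ¬ Squarefree m → ∃ p, p.Prime ∧ p * p ∣ m := by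
    intro m hm
    rw [Nat.squarefree_iff_prime_squarefree] at hm
    push_neg at hm
    obtain ⟨p, hp, hd⟩ := hm
    exact ⟨p, hp, hd⟩
  rcases hQ with h | h | h
  · obtain ⟨p, hp, hd⟩ := key _ h
    have hp2 : p ≠ 2 := by
      rintro rfl
      have h4 : (4 : ℕ) ∣ n * (n + 1) := by simpa using hd
      have := Nat.mod_eq_zero_of_dvd h4
      rw [this] at m1; exact absurd m1 (by norm_num)
    have hp3 : p ≠ 3 := by
      rintro rfl
      have h3 : (3 : ℕ) ∣ n * (n + 1) := dvd_trans ⟨3, rfl⟩ hd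
      have := Nat.mod_eq_zero_of_dvd h3
      rw [this] at m2; exact absurd m2 (by norm_num)
    have hp5 := prime_ge_five hp hp2 hp3
    have hnot : ¬(p ∣ n ∧ p ∣ (n + 1)) := by
      rintro ⟨ha, hb⟩
      have := Nat.dvd_sub hb ha
      have he : n + 1 - n = 1 := by omega
      rw [he] at this
      exact absurd (Nat.dvd_one.1 this) (by omega)
    rcases sq_dvd_split hp hd hnot with h' | h'
    · exact ⟨p, hp, hp5, Or.inl h'⟩
    · exact ⟨p, hp, hp5, Or.inr (Or.inl h')⟩
  · obtain ⟨p, hp, hd⟩ := key _ h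
    have hp2 : p ≠ 2 := by
      rintro rfl
      have h4 : (2 : ℕ) ∣ 3 * n * (3 * n + 4) := dvd_trans ⟨2, rfl⟩ hd
      have := Nat.mod_eq_zero_of_dvd h4
      rw [this] at m3; exact absurd m3 (by norm_num)
    have hp3 : p ≠ 3 := by
      rintro rfl
      have h9 : (9 : ℕ) ∣ 3 * n * (3 * n + 4) := by simpa using hd
      have := Nat.mod_eq_zero_of_dvd h9
      rw [this] at m4; exact absurd m4 (by norm_num)
    have hp5 := prime_ge_five hp hp2 hp3
    have hnot : ¬(p ∣ 3 * n ∧ p ∣ (3 * n + 4)) := by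
      rintro ⟨ha, hb⟩
      have := Nat.dvd_sub hb ha
      have he : 3 * n + 4 - 3 * n = 4 := by omega
      rw [he] at this
      have := Nat.le_of_dvd (by norm_num) this
      omega
    rcases sq_dvd_split hp hd hnot with h' | h'
    · -- p*p ∣ 3*n, p ≠ 3 so p*p ∣ n
      have hco : Nat.Coprime (p * p) 3 := by
        have := (Nat.coprime_primes hp (by norm_num)).2 hp3
        exact Nat.Coprime.mul this this
      exact ⟨p, hp, hp5, Or.inl (Nat.Coprime.dvd_of_dvd_mul_left hco h')⟩
    · exact ⟨p, hp, hp5, Or.inr (Or.inr h')⟩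
  · obtain ⟨p, hp, hd⟩ := key _ h
    have hp2 : p ≠ 2 := by
      rintro rfl
      have h4 : (4 : ℕ) ∣ (3 * n + 3) * (3 * n + 4) := by simpa using hd
      have := Nat.mod_eq_zero_of_dvd h4
      rw [this] at m5; exact absurd m5 (by norm_num)
    have hp3 : p ≠ 3 := by
      rintro rfl
      have h9 : (9 : ℕ) ∣ (3 * n + 3) * (3 * n + 4) := by simpa using hd
      have := Nat.mod_eq_zero_of_dvd h9
      rw [this] at m6; exact absurd m6 (by norm_num)
    have hp5 := prime_ge_five hp hp2 hp3
    have hnot : ¬(p ∣ (3 * n + 3) ∧ p ∣ (3 * n + 4)) := by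
      rintro ⟨ha, hb⟩
      have := Nat.dvd_sub hb ha
      have he : 3 * n + 4 - (3 * n + 3) = 1 := by omega
      rw [he] at this
      exact absurd (Nat.dvd_one.1 this) (by omega)
    rcases sq_dvd_split hp hd hnot with h' | h'
    · have hco : Nat.Coprime (p * p) 3 := by
        have := (Nat.coprime_primes hp (by norm_num)).2 hp3
        exact Nat.Coprime.mul this this
      have he : 3 * n + 3 = 3 * (n + 1) := by ring
      rw [he] at h'
      exact ⟨p, hp, hp5, Or.inr (Or.inl (Nat.Coprime.dvd_of_dvd_mul_left hco h'))⟩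
    · exact ⟨p, hp, hp5, Or.inr (Or.inr h')⟩

private lemma cardD (x p : ℕ) (hp : p.Prime) (hp5 : 5 ≤ p) :
    ((((Finset.range x).filter (fun n => n % 12 = 1)).filter
      (fun n => p * p ∣ n ∨ p * p ∣ (n + 1) ∨ p * p ∣ (3 * n + 4))).card : ℕ) ≤
      3 * (x / (12 * (p * p)) + 1) := by
  classical
  set A := (Finset.range x).filter (fun n => n % 12 = 1) with hA
  have hnd12 : ¬ p ∣ 12 := by
    intro hdvd
    have := Nat.le_of_dvd (by norm_num) hdvd
    interval_cases p <;> first | omega | exact absurd hp (by norm_num)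
  have hco : Nat.Coprime 12 (p * p) := by
    have h1 : Nat.Coprime 12 p := ((hp.coprime_iff_not_dvd).2 hnd12).symm
    exact h1.mul_right h1
  have hco3 : Nat.Coprime (p * p) 3 := by
    have h1 : Nat.Coprime p 3 := (Nat.coprime_primes hp (by norm_num)).2 (by omega)
    exact h1.mul h1
  have hppos : 0 < 12 * (p * p) := by positivity
  have hbase : ∀ (f : ℕ → ℕ), (∀ a b : ℕ, a ≤ b → (p * p ∣ f a → p * p ∣ f b → p * p ∣ b - a)) →
      (A.filter (fun n => p * p ∣ f n)).card ≤ x / (12 * (p * p)) + 1 := by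
    intro f hf
    apply countUpper x (12 * (p * p)) hppos
    · intro n hn
      simp only [hA, Finset.mem_filter, Finset.mem_range] at hn
      exact hn.1.1
    · intro a ha b hb hab
      simp only [hA, Finset.mem_filter, Finset.mem_range] at ha hb
      have h12 : (12 : ℕ) ∣ b - a := by
        have : a ≡ b [MOD 12] := by
          unfold Nat.ModEq
          rw [ha.1.2, hb.1.2]
        exact (Nat.modEq_iff_dvd' hab).1 this
      exact hco.mul_dvd_of_dvd_of_dvd h12 (hf a b hab ha.2 hb.2)
  have hE0 := hbase (fun n => n) (by
    intro a b hab ha hb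
    exact Nat.dvd_sub hb ha)
  have hE1 := hbase (fun n => n + 1) (by
    intro a b hab ha hb
    have := Nat.dvd_sub hb ha
    have he : b + 1 - (a + 1) = b - a := by omega
    rwa [he] at this)
  have hE2 := hbase (fun n => 3 * n + 4) (by
    intro a b hab ha hb
    have h1 := Nat.dvd_sub hb ha
    have he : 3 * b + 4 - (3 * a + 4) = 3 * (b - a) := by omega
    rw [he] at h1
    exact hco3.dvd_of_dvd_mul_left h1)
  have hsub : A.filter (fun n => p * p ∣ n ∨ p * p ∣ (n + 1) ∨ p * p ∣ (3 * n + 4)) ⊆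
      (A.filter (fun n => p * p ∣ n)) ∪ (A.filter (fun n => p * p ∣ (n + 1))) ∪
      (A.filter (fun n => p * p ∣ (3 * n + 4))) := by
    intro n hn
    simp only [Finset.mem_filter, Finset.mem_union] at hn ⊢
    tauto
  calc _ ≤ ((A.filter (fun n => p * p ∣ n)) ∪ (A.filter (fun n => p * p ∣ (n + 1))) ∪
      (A.filter (fun n => p * p ∣ (3 * n + 4)))).card := Finset.card_le_card hsub
    _ ≤ (A.filter (fun n => p * p ∣ n)).card + (A.filter (fun n => p * p ∣ (n + 1))).card +
        (A.filter (fun n => p * p ∣ (3 * n + 4))).card := by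
        refine le_trans (Finset.card_union_le _ _) ?_
        have := Finset.card_union_le (A.filter (fun n => p * p ∣ n))
          (A.filter (fun n => p * p ∣ (n + 1)))
        omega
    _ ≤ 3 * (x / (12 * (p * p)) + 1) := by
        have hE0' : (A.filter (fun n => p * p ∣ n)).card ≤ x / (12 * (p * p)) + 1 := hE0
        have hE1' : (A.filter (fun n => p * p ∣ (n + 1))).card ≤ x / (12 * (p * p)) + 1 := hE1
        have hE2' : (A.filter (fun n => p * p ∣ (3 * n + 4))).card ≤ x / (12 * (p * p)) + 1 := hE2
        omega

/-- There are infinitely many positive integers `n ≡ 1 (mod 12)` such that `n(n+1)`,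
`3n(3n+4)` and `(3n+3)(3n+4)` are all squarefree. -/
theorem stmt_12 :
    {n : ℕ | n % 12 = 1 ∧ Squarefree (n * (n + 1)) ∧ Squarefree (3 * n * (3 * n + 4)) ∧
      Squarefree ((3 * n + 3) * (3 * n + 4))}.Infinite := by
  classical
  apply Set.infinite_of_not_bddAbove
  rintro ⟨N, hN⟩
  rw [mem_upperBounds] at hN
  obtain ⟨x, hxdef⟩ : ∃ x : ℕ, x = 100 * N + 1000000 := ⟨_, rfl⟩
  set z := Nat.sqrt (3 * x + 4) with hzdef
  set A := (Finset.range x).filter (fun n => n % 12 = 1) with hAdef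
  set Pr := (Finset.Icc 5 z).filter Nat.Prime with hPrdef
  set Q : ℕ → Prop := fun n => Squarefree (n * (n + 1)) ∧ Squarefree (3 * n * (3 * n + 4)) ∧
      Squarefree ((3 * n + 3) * (3 * n + 4)) with hQdef
  set G := A.filter Q with hGdef
  set B := A.filter (fun n => ¬ Q n) with hBdef
  set D : ℕ → Finset ℕ := fun p =>
    A.filter (fun n => p * p ∣ n ∨ p * p ∣ (n + 1) ∨ p * p ∣ (3 * n + 4)) with hDdef
  have hsplit : G.card + B.card = A.card := Finset.card_filter_add_card_filter_not Q
  have hAlb : x / 12 ≤ A.card := countA x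
  -- every bad n lies in some D p
  have hBsub : B ⊆ Pr.biUnion D := by
    intro n hn
    simp only [hBdef, hAdef, Finset.mem_filter, Finset.mem_range] at hn
    obtain ⟨⟨hnx, hn12⟩, hnQ⟩ := hn
    obtain ⟨p, hp, hp5, hdvd⟩ := bad_split n hn12 hnQ
    have hn1 : 1 ≤ n := by omega
    have hple : p ≤ z := by
      rw [hzdef, Nat.le_sqrt]
      rcases hdvd with h | h | h
      · exact le_trans (Nat.le_of_dvd (by omega) h) (by omega)
      · exact le_trans (Nat.le_of_dvd (by omega) h) (by omega)
      · exact le_trans (Nat.le_of_dvd (by omega) h) (by omega)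
    rw [Finset.mem_biUnion]
    refine ⟨p, ?_, ?_⟩
    · simp only [hPrdef, Finset.mem_filter, Finset.mem_Icc]
      exact ⟨⟨hp5, hple⟩, hp⟩
    · simp only [hDdef, hAdef, Finset.mem_filter, Finset.mem_range]
      exact ⟨⟨hnx, hn12⟩, hdvd⟩
  have hBcard : B.card ≤ ∑ p ∈ Pr, (D p).card :=
    le_trans (Finset.card_le_card hBsub) Finset.card_biUnion_le
  have hppos : ∀ p ∈ Pr, 5 ≤ p ∧ p.Prime ∧ p ≤ z := by
    intro p hp
    simp only [hPrdef, Finset.mem_filter, Finset.mem_Icc] at hp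
    exact ⟨hp.1.1, hp.2, hp.1.2⟩
  -- per-prime real bound
  have hDreal : ∀ p ∈ Pr, ((D p).card : ℝ) ≤ (x : ℝ) / 4 * (1 / (p : ℝ) ^ 2) + 3 := by
    intro p hp
    obtain ⟨hp5, hpp, _⟩ := hppos p hp
    have h1 : (D p).card ≤ 3 * (x / (12 * (p * p)) + 1) := cardD x p hpp hp5
    have h2 : ((x / (12 * (p * p)) : ℕ) : ℝ) ≤ (x : ℝ) / (12 * (p : ℝ) * (p : ℝ)) := by
      have h := Nat.cast_div_le (α := ℝ) (m := x) (n := 12 * (p * p))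
      push_cast at h
      calc ((x / (12 * (p * p)) : ℕ) : ℝ) ≤ (x : ℝ) / (12 * ((p : ℝ) * (p : ℝ))) := h
        _ = (x : ℝ) / (12 * (p : ℝ) * (p : ℝ)) := by ring_nf
    have hp0 : (5 : ℝ) ≤ (p : ℝ) := by exact_mod_cast hp5
    calc ((D p).card : ℝ) ≤ 3 * (((x / (12 * (p * p)) : ℕ) : ℝ) + 1) := by exact_mod_cast h1
      _ ≤ 3 * ((x : ℝ) / (12 * (p : ℝ) * (p : ℝ)) + 1) := by linarith
      _ = (x : ℝ) / 4 * (1 / (p : ℝ) ^ 2) + 3 := by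
          have : (p : ℝ) ≠ 0 := by linarith
          field_simp
          ring
  -- sum of 1/p^2 over Pr
  have hsum : ∑ p ∈ Pr, (1 : ℝ) / (p : ℝ) ^ 2 ≤ 1 / 8 := by
    have hsub : Pr ⊆ (Finset.range z).image (fun j : ℕ => 2 * j + 5) := by
      intro p hp
      obtain ⟨hp5, hpp, hpz⟩ := hppos p hp
      have hodd : p % 2 = 1 := by
        rcases Nat.even_or_odd p with he | ho
        · rw [hpp.even_iff] at he; omega
        · exact Nat.odd_iff.mp ho
      rw [Finset.mem_image]
      exact ⟨(p - 5) / 2, by rw [Finset.mem_range]; omega, by show 2 * ((p - 5) / 2) + 5 = p; omega⟩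
    calc ∑ p ∈ Pr, (1 : ℝ) / (p : ℝ) ^ 2
        ≤ ∑ m ∈ (Finset.range z).image (fun j : ℕ => 2 * j + 5), (1 : ℝ) / (m : ℝ) ^ 2 := by
          apply Finset.sum_le_sum_of_subset_of_nonneg hsub
          intro i _ _
          positivity
      _ = ∑ j ∈ Finset.range z, (1 : ℝ) / ((2 * j + 5 : ℕ) : ℝ) ^ 2 :=
          Finset.sum_image (f := fun m : ℕ => (1 : ℝ) / (m : ℝ) ^ 2)
            (g := fun j : ℕ => 2 * j + 5)
            (by intro a _ b _ h; have h' : 2 * a + 5 = 2 * b + 5 := h; omega)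
      _ ≤ 1 / 8 := sum_inv_sq z
  have hPrcard : Pr.card ≤ z := by
    have h := Finset.card_filter_le (Finset.Icc 5 z) Nat.Prime
    rw [Nat.card_Icc] at h
    rw [hPrdef]
    omega
  -- real bound on B
  have hBreal : (B.card : ℝ) ≤ (x : ℝ) / 32 + 3 * (z : ℝ) := by
    have h1 : (B.card : ℝ) ≤ ∑ p ∈ Pr, ((D p).card : ℝ) := by
      exact_mod_cast hBcard
    have h2 : ∑ p ∈ Pr, ((D p).card : ℝ) ≤ ∑ p ∈ Pr, ((x : ℝ) / 4 * (1 / (p : ℝ) ^ 2) + 3) :=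
      Finset.sum_le_sum hDreal
    have h3 : ∑ p ∈ Pr, ((x : ℝ) / 4 * (1 / (p : ℝ) ^ 2) + 3) =
        (x : ℝ) / 4 * (∑ p ∈ Pr, (1 : ℝ) / (p : ℝ) ^ 2) + 3 * (Pr.card : ℝ) := by
      rw [Finset.sum_add_distrib, ← Finset.mul_sum, Finset.sum_const, nsmul_eq_mul]
      ring
    have hx4 : (0 : ℝ) ≤ (x : ℝ) / 4 := by positivity
    have h4 := mul_le_mul_of_nonneg_left hsum hx4
    have h5 : (Pr.card : ℝ) ≤ (z : ℝ) := by exact_mod_cast hPrcard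
    have hx0 : (0 : ℝ) ≤ (x : ℝ) := Nat.cast_nonneg x
    calc (B.card : ℝ) ≤ _ := h1
      _ ≤ _ := h2
      _ = _ := h3
      _ ≤ (x : ℝ) / 4 * (1 / 8) + 3 * (z : ℝ) := by linarith
      _ = (x : ℝ) / 32 + 3 * (z : ℝ) := by ring
  -- z bound
  have hzb : 1000 * z ≤ 3 * x + 1000004 := by
    have h1 : z * z ≤ 3 * x + 4 := Nat.sqrt_le _
    rcases le_or_gt z 1000 with h | h
    · omega
    · have h2 : 1000 * z ≤ z * z := Nat.mul_le_mul_right z (by omega)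
      exact le_trans h2 (le_trans h1 (by omega))
  -- A real lower bound
  have hAreal : (x : ℝ) / 12 - 1 ≤ (A.card : ℝ) := by
    have h1 : x < 12 * (x / 12) + 12 := by omega
    have h2 : ((x / 12 : ℕ) : ℝ) ≤ (A.card : ℝ) := by exact_mod_cast hAlb
    have h3 : (x : ℝ) < 12 * ((x / 12 : ℕ) : ℝ) + 12 := by exact_mod_cast h1
    linarith
  -- conclude G is large
  have hGreal : (N : ℝ) + 1 < (G.card : ℝ) := by
    have hzr : (1000 : ℝ) * (z : ℝ) ≤ 3 * (x : ℝ) + 1000004 := by exact_mod_cast hzb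
    have hGc : (G.card : ℝ) + (B.card : ℝ) = (A.card : ℝ) := by exact_mod_cast hsplit
    have hxN : (x : ℝ) = 100 * (N : ℝ) + 1000000 := by rw [hxdef]; push_cast; ring
    have hN0 : (0 : ℝ) ≤ (N : ℝ) := Nat.cast_nonneg N
    linarith
  have hGnat : N + 1 < G.card := by exact_mod_cast hGreal
  have hGsub : G ⊆ Finset.range (N + 1) := by
    intro n hn
    simp only [hGdef, hAdef, Finset.mem_filter, Finset.mem_range] at hn
    have hnS : n ∈ {n : ℕ | n % 12 = 1 ∧ Squarefree (n * (n + 1)) ∧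
        Squarefree (3 * n * (3 * n + 4)) ∧ Squarefree ((3 * n + 3) * (3 * n + 4))} := by
      refine ⟨hn.1.2, hn.2⟩
    have := hN n hnS
    rw [Finset.mem_range]
    omega
  have hfin := Finset.card_le_card hGsub
  rw [Finset.card_range] at hfin
  omega
end

section
/- A subset A of 𝒳 is dense in 𝒳 (with respect to the constructible topology) if and only if for every pair of totally real number fields K_0 ⊆ L_0 with L_0/K_0 a finite Galois extension, there exists K ∈ A with K ∩ L_0 = K_0. -/
open Polynomial NumberField

set_option synthInstance.maxHeartbeats 400000
set_option maxHeartbeats 400000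

noncomputable section

/-- `𝒳`: the space of all totally real fields, i.e. of all subfields of `ℚ^tr`, realized as
the subfields of `ℂ` all of whose elements are totally real algebraic numbers. -/
def TotallyRealFields : Type := {K : Subfield ℂ // ∀ x : ↥K, IsTotallyRealNum ↑x}

/-- The constructible topology on `𝒳`: the coarsest topology in which, for every totally real
algebraic number `a`, the set `{K ∈ 𝒳 | a ∈ K}` is both open and closed. -/
instance : TopologicalSpace TotallyRealFields :=
  TopologicalSpace.generateFrom
    {U : Set TotallyRealFields | ∃ a : ℂ, IsTotallyRealNum a ∧
      (U = {K : TotallyRealFields | a ∈ K.1} ∨ U = {K : TotallyRealFields | a ∉ K.1})}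

section Helpers

open IntermediateField

set_option maxHeartbeats 1000000

lemma TRF.fd_transfer {X : Type*} [AddCommGroup X] {a b : Module ℚ X}
    (h : @FiniteDimensional ℚ X _ _ a) : @FiniteDimensional ℚ X _ _ b := by
  obtain rfl : a = b := Subsingleton.elim a b; exact h

lemma TRF.normal_transfer {X : Type*} [Field X] {a b : Algebra ℚ X}
    (h : @Normal ℚ X _ _ a) : @Normal ℚ X _ _ b := by
  obtain rfl : a = b := Subsingleton.elim a b; exact h

lemma TRF.prim_subfield (M : Subfield ℂ) (hfd : FiniteDimensional ℚ ↥M) :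
    ∃ β : ℂ, β ∈ M ∧ ∀ K : Subfield ℂ, (M ≤ K ↔ β ∈ K) := by
  haveI := hfd
  haveI : Algebra.IsAlgebraic ℚ ↥M := Algebra.IsAlgebraic.of_finite ℚ ↥M
  obtain ⟨θ, hθ⟩ := Field.exists_primitive_element ℚ ↥M
  refine ⟨↑θ, θ.2, fun K => ⟨fun h => h θ.2, fun hβ y hy => ?_⟩⟩
  let T : IntermediateField ℚ ↥M :=
    Subfield.toIntermediateField (Subfield.comap M.subtype K) (fun q => by
      show M.subtype ((algebraMap ℚ ↥M) q) ∈ K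
      have h1 := eq_ratCast (M.subtype.comp (algebraMap ℚ ↥M)) q
      rw [RingHom.comp_apply] at h1
      rw [h1]; exact SubfieldClass.ratCast_mem K q)
  have hT : θ ∈ T := hβ
  have h2 : (⟨y, hy⟩ : ↥M) ∈ (⊤ : IntermediateField ℚ ↥M) := trivial
  rw [← hθ] at h2
  exact adjoin_simple_le_iff.mpr hT h2

lemma TRF.fd_of_le (M L : Subfield ℂ) (h : M ≤ L) (hfd : FiniteDimensional ℚ ↥L) :
    FiniteDimensional ℚ ↥M := by
  haveI := hfd
  exact FiniteDimensional.of_injective (Subfield.inclusion h).toRatAlgHom.toLinearMap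
    (Subfield.inclusion h).injective

def TRF.sfToIF (L : Subfield ℂ) (M : Subfield ℂ) : IntermediateField ℚ ↥L :=
  Subfield.toIntermediateField (Subfield.comap L.subtype M) (fun q => by
    show L.subtype ((algebraMap ℚ ↥L) q) ∈ M
    have h1 := eq_ratCast (L.subtype.comp (algebraMap ℚ ↥L)) q
    rw [RingHom.comp_apply] at h1
    rw [h1]; exact SubfieldClass.ratCast_mem M q)

lemma TRF.finite_sub (L : Subfield ℂ) (hfd : FiniteDimensional ℚ ↥L) :
    Finite {M : Subfield ℂ // M ≤ L} := by
  haveI := hfd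
  haveI : Algebra.IsAlgebraic ℚ ↥L := Algebra.IsAlgebraic.of_finite ℚ ↥L
  haveI : Finite (IntermediateField ℚ ↥L) :=
    Field.finite_intermediateField_of_exists_primitive_element ℚ ↥L
      (Field.exists_primitive_element ℚ ↥L)
  refine Finite.of_injective (fun M => TRF.sfToIF L M.1) ?_
  intro M N h
  simp only at h
  apply Subtype.ext
  ext z
  constructor
  · intro hz
    have h2 : (⟨z, M.2 hz⟩ : ↥L) ∈ TRF.sfToIF L M.1 := hz
    rw [h] at h2; exact h2
  · intro hz
    have h2 : (⟨z, N.2 hz⟩ : ↥L) ∈ TRF.sfToIF L N.1 := hz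
    rw [← h] at h2; exact h2

lemma TRF.conj_hom_abs (F L C : Type*) [Field F] [Field L] [Field C] [Algebra F L] [Algebra F C]
    [IsAlgClosed C] [FiniteDimensional F L] (x : L) (w : C)
    (hw : aeval w (minpoly F x) = 0) : ∃ σ : L →ₐ[F] C, σ x = w := by
  have hx : IsIntegral F x := IsIntegral.of_finite F x
  have hw' : w ∈ (minpoly F x).aroots C := by
    rw [Polynomial.mem_aroots]; exact ⟨minpoly.ne_zero hx, hw⟩
  let φ : ↥F⟮x⟯ →ₐ[F] C := (algHomAdjoinIntegralEquiv F (K := C) hx).symm ⟨w, hw'⟩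
  have hφ : φ (AdjoinSimple.gen F x) = w := algHomAdjoinIntegralEquiv_symm_apply_gen F hx _
  letI : Algebra ↥F⟮x⟯ C := φ.toRingHom.toAlgebra
  haveI : IsScalarTower F ↥F⟮x⟯ C := IsScalarTower.of_algebraMap_eq (fun q => (φ.commutes q).symm)
  haveI : FiniteDimensional ↥F⟮x⟯ L := FiniteDimensional.right F ↥F⟮x⟯ L
  haveI : Algebra.IsAlgebraic ↥F⟮x⟯ L := Algebra.IsAlgebraic.of_finite _ _
  haveI : NoZeroSMulDivisors ↥F⟮x⟯ C :=
    inferInstance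
  let ψ : L →ₐ[↥F⟮x⟯] C := IsAlgClosed.lift
  refine ⟨ψ.restrictScalars F, ?_⟩
  have h3 : x = algebraMap ↥F⟮x⟯ L (AdjoinSimple.gen F x) := rfl
  show ψ x = w
  exact (congrArg ψ h3).trans ((ψ.commutes _).trans hφ)

lemma TRF.conj_hom (L : IntermediateField ℚ ℂ) [FiniteDimensional ℚ ↥L] (x : ↥L) (w : ℂ)
    (hw : aeval w (minpoly ℚ (x : ℂ)) = 0) : ∃ σ : ↥L →ₐ[ℚ] ℂ, σ x = w := by
  have hmin : minpoly ℚ (x : ℂ) = minpoly ℚ x := by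
    have := minpoly.algebraMap_eq (B := ↥L) (B' := ℂ) (A := ℚ)
      (algebraMap ↥L ℂ).injective x
    simpa using this
  rw [hmin] at hw
  exact TRF.conj_hom_abs ℚ ↥L ℂ x w hw

def TRF.realSub : Subfield ℂ := Complex.ofRealHom.fieldRange

lemma TRF.mem_realSub {z : ℂ} : z ∈ TRF.realSub ↔ z.im = 0 := by
  constructor
  · rintro ⟨r, rfl⟩; exact Complex.ofReal_im r
  · intro h; exact ⟨z.re, Complex.ext rfl (by simp [h])⟩

lemma TRF.tr_adjoin (p : ℚ[X]) (hp : p ≠ 0) (hroots : ∀ z ∈ p.rootSet ℂ, z.im = 0)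
    (x : ↥(adjoin ℚ (p.rootSet ℂ))) : IsTotallyRealNum ↑x := by
  haveI : FiniteDimensional ℚ ↥(adjoin ℚ (p.rootSet ℂ)) :=
    finiteDimensional_adjoin (fun z hz => IsAlgebraic.isIntegral ⟨p, hp, (mem_rootSet.mp hz).2⟩)
  constructor
  · exact (IsIntegral.of_finite ℚ x |>.map
      (IsScalarTower.toAlgHom ℚ ↥(adjoin ℚ (p.rootSet ℂ)) ℂ)).isAlgebraic
  · intro w hw
    obtain ⟨σ, hσ⟩ := TRF.conj_hom _ x w hw
    haveI : IsSplittingField ℚ ↥(adjoin ℚ (p.rootSet ℂ)) p :=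
      adjoin_rootSet_isSplittingField (IsAlgClosed.splits (p.map (algebraMap ℚ ℂ)))
    have halg : Algebra.adjoin ℚ (p.rootSet ↥(adjoin ℚ (p.rootSet ℂ))) = ⊤ :=
      IsSplittingField.adjoin_rootSet _ p
    have htop : ∀ y, y ∈ adjoin ℚ (p.rootSet ↥(adjoin ℚ (p.rootSet ℂ))) := fun y =>
      algebra_adjoin_le_adjoin ℚ _ (halg ▸ Algebra.mem_top)
    let T : IntermediateField ℚ ↥(adjoin ℚ (p.rootSet ℂ)) :=
      Subfield.toIntermediateField (TRF.realSub.comap σ.toRingHom) (fun q => by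
        show σ (algebraMap ℚ _ q) ∈ TRF.realSub
        rw [σ.commutes q, TRF.mem_realSub]
        have h1 := eq_ratCast (algebraMap ℚ ℂ) q
        rw [h1]; exact Complex.ratCast_im q)
    have hT : adjoin ℚ (p.rootSet ↥(adjoin ℚ (p.rootSet ℂ))) ≤ T := by
      rw [adjoin_le_iff]
      intro r hr
      have h2 : aeval (σ r) p = 0 := by
        rw [Polynomial.aeval_algHom_apply]
        rw [(mem_rootSet.mp hr).2, map_zero]
      show σ r ∈ TRF.realSub
      exact TRF.mem_realSub.mpr (hroots _ (mem_rootSet.mpr ⟨hp, h2⟩))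
    have h3 : x ∈ T := hT (htop x)
    have h4 : (σ x).im = 0 := TRF.mem_realSub.mp h3
    rwa [hσ] at h4

end Helpers

/-- A subset `A ⊆ 𝒳` is dense (for the constructible topology) if and only if for every pair
`K₀ ⊆ L₀` of totally real number fields with `L₀/K₀` a finite Galois extension, there exists
`K ∈ A` with `K ∩ L₀ = K₀`. -/
theorem stmt_15 (A : Set TotallyRealFields) :
    Dense A ↔
      ∀ (K₀ L₀ : Subfield ℂ) (hle : K₀ ≤ L₀), (∀ x : ↥L₀, IsTotallyRealNum ↑x) →
        FiniteDimensional ℚ ↥K₀ → FiniteDimensional ℚ ↥L₀ →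
        (letI : Algebra ↥K₀ ↥L₀ := (Subfield.inclusion hle).toAlgebra
         IsGalois ↥K₀ ↥L₀) →
        ∃ K ∈ A, K.1 ⊓ L₀ = K₀ := by
  constructor
  · -- forward direction
    intro hd K₀ L₀ hle htrL hfdK hfdL _
    have htrK : ∀ x : ↥K₀, IsTotallyRealNum ↑x := fun x => htrL ⟨↑x, hle x.2⟩
    obtain ⟨θ, hθK₀, hθ⟩ := TRF.prim_subfield K₀ hfdK
    haveI : Finite {M : Subfield ℂ // M ≤ L₀} := TRF.finite_sub L₀ hfdL
    have hβex : ∀ M : {M : Subfield ℂ // M ≤ L₀}, ∃ β : ℂ, β ∈ M.1 ∧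
        ∀ K : Subfield ℂ, (M.1 ≤ K ↔ β ∈ K) :=
      fun M => TRF.prim_subfield M.1 (TRF.fd_of_le M.1 L₀ M.2 hfdL)
    choose β hβmem hβ using hβex
    set U : Set TotallyRealFields :=
      {K | θ ∈ K.1} ∩ ⋂ (M : {M : Subfield ℂ // M ≤ L₀}) (_ : ¬ M.1 ≤ K₀),
        {K | β M ∉ K.1} with hUdef
    have hUopen : IsOpen U := by
      apply IsOpen.inter
      · exact TopologicalSpace.isOpen_generateFrom_of_mem ⟨θ, htrK ⟨θ, hθK₀⟩, Or.inl rfl⟩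
      · refine isOpen_iInter_of_finite (fun M => ?_)
        refine isOpen_iInter_of_finite (fun hM => ?_)
        refine TopologicalSpace.isOpen_generateFrom_of_mem ⟨β M, ?_, Or.inr rfl⟩
        exact htrL ⟨β M, M.2 (hβmem M)⟩
    have hx₀ : (⟨K₀, htrK⟩ : TotallyRealFields) ∈ U := by
      constructor
      · exact hθK₀
      · refine Set.mem_iInter.mpr (fun M => Set.mem_iInter.mpr (fun hM => ?_))
        intro hβK₀
        exact hM ((hβ M K₀).mpr hβK₀)
    obtain ⟨K, hKA, hKU⟩ := hd.exists_mem_open hUopen ⟨_, hx₀⟩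
    refine ⟨K, hKA, ?_⟩
    obtain ⟨hKθ, hKneg⟩ := hKU
    have hK₀K : K₀ ≤ K.1 := (hθ K.1).mpr hKθ
    apply le_antisymm
    · by_contra hcon
      have hM : ¬ (K.1 ⊓ L₀ ≤ K₀) := hcon
      have h5 := Set.mem_iInter.mp (Set.mem_iInter.mp hKneg ⟨K.1 ⊓ L₀, inf_le_right⟩) hM
      exact h5 (hβmem ⟨K.1 ⊓ L₀, inf_le_right⟩).1
    · exact le_inf hK₀K hle
  · -- backward direction
    intro hA
    rw [dense_iff_inter_open]
    intro U hU hUne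
    obtain ⟨x, hx⟩ := hUne
    have hB := TopologicalSpace.isTopologicalBasis_of_subbasis
      (s := {U : Set TotallyRealFields | ∃ a : ℂ, IsTotallyRealNum a ∧
        (U = {K : TotallyRealFields | a ∈ K.1} ∨ U = {K : TotallyRealFields | a ∉ K.1})}) rfl
    obtain ⟨V, hVB, hxV, hVU⟩ := hB.exists_subset_of_mem_open hx hU
    obtain ⟨f, ⟨hfin, hfsub⟩, rfl⟩ := hVB
    have hwit : ∀ t ∈ f, ∃ a : ℂ, IsTotallyRealNum a ∧
        (t = {K : TotallyRealFields | a ∈ K.1} ∨ t = {K : TotallyRealFields | a ∉ K.1}) :=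
      fun t ht => hfsub ht
    choose! g hg1 hg2 using hwit
    have hSfin : (g '' f).Finite := hfin.image g
    set p : ℚ[X] := ∏ a ∈ hSfin.toFinset, minpoly ℚ a with hpdef
    have htrS : ∀ a ∈ hSfin.toFinset, IsTotallyRealNum a := by
      intro a ha
      rw [Set.Finite.mem_toFinset] at ha
      obtain ⟨t, ht, rfl⟩ := ha
      exact hg1 t ht
    have hp : p ≠ 0 := by
      rw [hpdef, Finset.prod_ne_zero_iff]
      intro a ha
      exact minpoly.ne_zero ((htrS a ha).1.isIntegral)
    have hroots : ∀ z ∈ p.rootSet ℂ, z.im = 0 := by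
      intro z hz
      have h1 : aeval z p = 0 := (mem_rootSet.mp hz).2
      rw [hpdef, map_prod] at h1
      obtain ⟨a, ha, ha0⟩ := Finset.prod_eq_zero_iff.mp h1
      exact (htrS a ha).2 z ha0
    have hfdLc : FiniteDimensional ℚ ↥(IntermediateField.adjoin ℚ (p.rootSet ℂ)) :=
      IntermediateField.finiteDimensional_adjoin
        (fun z hz => IsAlgebraic.isIntegral ⟨p, hp, (mem_rootSet.mp hz).2⟩)
    set L₀ : Subfield ℂ := (IntermediateField.adjoin ℚ (p.rootSet ℂ)).toSubfield with hL₀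
    have hSL : ∀ a ∈ hSfin.toFinset, a ∈ L₀ := by
      intro a ha
      have h1 : aeval a p = 0 := by
        rw [hpdef, map_prod]
        exact Finset.prod_eq_zero ha (minpoly.aeval ℚ a)
      exact IntermediateField.subset_adjoin ℚ _ (mem_rootSet.mpr ⟨hp, h1⟩)
    have htrL : ∀ y : ↥L₀, IsTotallyRealNum ↑y := fun y => TRF.tr_adjoin p hp hroots y
    have hfdL₀ : FiniteDimensional ℚ ↥L₀ := TRF.fd_transfer hfdLc
    set K₀ : Subfield ℂ := x.1 ⊓ L₀ with hK₀
    have hle : K₀ ≤ L₀ := inf_le_right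
    have hfdK₀ : FiniteDimensional ℚ ↥K₀ := TRF.fd_of_le _ _ hle hfdL₀
    have hgal : (letI : Algebra ↥K₀ ↥L₀ := (Subfield.inclusion hle).toAlgebra
        IsGalois ↥K₀ ↥L₀) := by
      letI : Algebra ↥K₀ ↥L₀ := (Subfield.inclusion hle).toAlgebra
      haveI : IsScalarTower ℚ ↥K₀ ↥L₀ :=
        IsScalarTower.of_algebraMap_eq' (Subsingleton.elim _ _)
      haveI hsplit : IsSplittingField ℚ ↥(IntermediateField.adjoin ℚ (p.rootSet ℂ)) p :=
        IntermediateField.adjoin_rootSet_isSplittingField (IsAlgClosed.splits (p.map (algebraMap ℚ ℂ)))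
      haveI hnorm : Normal ℚ ↥L₀ := TRF.normal_transfer
        (Normal.of_isSplittingField (E := ↥(IntermediateField.adjoin ℚ (p.rootSet ℂ))) p)
      haveI : Normal ↥K₀ ↥L₀ := Normal.tower_top_of_normal (F := ℚ) (K := ↥K₀) (E := ↥L₀)
      haveI : FiniteDimensional ↥K₀ ↥L₀ := FiniteDimensional.right ℚ ↥K₀ ↥L₀
      haveI : Algebra.IsAlgebraic ↥K₀ ↥L₀ := Algebra.IsAlgebraic.of_finite _ _
      haveI : Algebra.IsSeparable ↥K₀ ↥L₀ := inferInstance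
      exact IsGalois.mk
    obtain ⟨K, hKA, hKeq⟩ := hA K₀ L₀ hle htrL hfdK₀ hfdL₀ hgal
    have hKf : K ∈ ⋂₀ f := by
      intro t ht
      have hgmem : g t ∈ L₀ := hSL (g t) (by
        rw [Set.Finite.mem_toFinset]; exact ⟨t, ht, rfl⟩)
      have hxK : ∀ z : ℂ, z ∈ L₀ → (z ∈ x.1 ↔ z ∈ K.1) := by
        intro z hz
        constructor
        · intro h1
          have h2 : z ∈ K₀ := by rw [hK₀]; exact Subfield.mem_inf.mpr ⟨h1, hz⟩
          rw [← hKeq] at h2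
          exact (Subfield.mem_inf.mp h2).1
        · intro h1
          have h2 : z ∈ K.1 ⊓ L₀ := Subfield.mem_inf.mpr ⟨h1, hz⟩
          rw [hKeq, hK₀] at h2
          exact (Subfield.mem_inf.mp h2).1
      rcases hg2 t ht with h | h
      · rw [h]
        have h6 := hxV t ht; rw [h] at h6
        exact (hxK _ hgmem).mp h6
      · rw [h]
        have h6 := hxV t ht; rw [h] at h6
        exact fun hKt => h6 ((hxK _ hgmem).mpr hKt)
    exact ⟨K, hVU hKf, hKA⟩

end
end

section
/- The set N' = {K ∈ 𝒳 : the set {x ∈ O_K : ⌂(x) < 2} is finite} is a meager subset of 𝒳 (with respect to the constructible topology). In particular, its subset N = {K ∈ 𝒳 : O_K has the Northcott property with respect to the house} is meager. -/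
open Polynomial NumberField

set_option synthInstance.maxHeartbeats 400000
set_option maxHeartbeats 400000

noncomputable section

section Aux

/-! ### Auxiliary embedding lemmas -/

lemma trAux_algHom_root {S : Set ℂ} (φ : IntermediateField.adjoin ℚ S →ₐ[ℚ] ℂ) {y : ℂ}
    (hy : y ∈ IntermediateField.adjoin ℚ S) : aeval (φ ⟨y, hy⟩) (minpoly ℚ y) = 0 := by
  have h1 : minpoly ℚ y = minpoly ℚ (⟨y, hy⟩ : IntermediateField.adjoin ℚ S) :=
    minpoly.algebraMap_eq (algebraMap (IntermediateField.adjoin ℚ S) ℂ).injective ⟨y, hy⟩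
  rw [h1, Polynomial.aeval_algHom_apply, minpoly.aeval, map_zero]

open IntermediateField in
lemma trAux_exists_algHom {S : Set ℂ} (hS : ∀ s ∈ S, IsIntegral ℚ s) {x w : ℂ}
    (hx : x ∈ adjoin ℚ S) (hw : aeval w (minpoly ℚ x) = 0) :
    ∃ φ : adjoin ℚ S →ₐ[ℚ] ℂ, φ ⟨x, hx⟩ = w :=
  exists_algHom_adjoin_of_splits_of_aeval
    (fun s hs => ⟨hS s hs, IsAlgClosed.splits _⟩) hx hw

open IntermediateField in
lemma totallyReal_adjoin {S : Set ℂ} (hS : ∀ z ∈ S, IsTotallyRealNum z) :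
    ∀ x ∈ adjoin ℚ S, IsTotallyRealNum x := by
  intro x hx
  have hSi : ∀ s ∈ S, IsIntegral ℚ s := fun s hs => ((hS s hs).1).isIntegral
  haveI := isAlgebraic_adjoin (L := ℂ) (K := ℚ) hSi
  constructor
  · exact (isAlgebraic_iff (S := adjoin ℚ S)).mp
      (Algebra.IsAlgebraic.isAlgebraic (⟨x, hx⟩ : adjoin ℚ S))
  · intro w hw
    obtain ⟨φ, hφ⟩ := trAux_exists_algHom hSi hx hw
    have hall : ∀ y (hy : y ∈ adjoin ℚ S), (φ ⟨y, hy⟩).im = 0 := by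
      intro y hy
      induction hy using IntermediateField.adjoin_induction with
      | mem y hy => exact (hS y hy).2 _ (trAux_algHom_root φ (subset_adjoin _ _ hy))
      | algebraMap q =>
        have h2 : (⟨algebraMap ℚ ℂ q, IntermediateField.algebraMap_mem _ q⟩ : adjoin ℚ S)
            = algebraMap ℚ (adjoin ℚ S) q := rfl
        rw [h2, φ.commutes]; simp
      | add a b ha hb hpa hpb =>
        have : (⟨a + b, add_mem ha hb⟩ : adjoin ℚ S) = ⟨a, ha⟩ + ⟨b, hb⟩ := rfl
        rw [this, map_add, Complex.add_im, hpa, hpb, add_zero]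
      | inv a ha hpa =>
        have : (⟨a⁻¹, inv_mem ha⟩ : adjoin ℚ S) = (⟨a, ha⟩ : adjoin ℚ S)⁻¹ := rfl
        rw [this, map_inv₀, Complex.inv_im, hpa, neg_zero, zero_div]
      | mul a b ha hb hpa hpb =>
        have : (⟨a * b, mul_mem ha hb⟩ : adjoin ℚ S) = ⟨a, ha⟩ * ⟨b, hb⟩ := rfl
        rw [this, map_mul, Complex.mul_im, hpa, hpb, mul_zero, zero_mul, add_zero]
    rw [← hφ]
    exact hall x hx

/-! ### The elements `2 cos (2π/p)` -/

def zgen (p : ℕ) : ℂ := Complex.exp (2 * Real.pi * Complex.I / p)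
def cgen (p : ℕ) : ℂ := zgen p + (zgen p)⁻¹

open Real in
lemma zgen_prim {p : ℕ} (hp : p ≠ 0) : IsPrimitiveRoot (zgen p) p :=
  Complex.isPrimitiveRoot_exp p hp

lemma zgen_pow {p : ℕ} (hp : p ≠ 0) : (zgen p) ^ p = 1 := (zgen_prim hp).pow_eq_one

lemma zgen_integral {p : ℕ} (hp : p ≠ 0) : IsIntegral ℤ (zgen p) := by
  refine ⟨X ^ p - 1, ?_, ?_⟩
  · simpa using monic_X_pow_sub_C (1 : ℤ) hp
  · simp [zgen_pow hp]

lemma zgen_inv {p : ℕ} (hp : p ≠ 0) : (zgen p)⁻¹ = (zgen p) ^ (p - 1) := by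
  have h0 : zgen p ≠ 0 := fun h => by simpa [h, zero_pow hp] using zgen_pow hp
  field_simp
  rw [← pow_succ']
  have : (p - 1) + 1 = p := by omega
  rw [this, zgen_pow hp]

lemma cgen_integral {p : ℕ} (hp : p ≠ 0) : IsIntegral ℤ (cgen p) := by
  have h := zgen_integral hp
  have : IsIntegral ℤ ((zgen p)⁻¹) := zgen_inv hp ▸ h.pow _
  exact h.add this

open Real in
lemma zgen_eq (p : ℕ) : zgen p = Complex.exp ((2 * Real.pi / p : ℝ) * Complex.I) := by
  unfold zgen
  push_cast
  ring_nf

open Real in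
lemma cgen_eq (p : ℕ) : cgen p = ((2 * Real.cos (2 * Real.pi / p) : ℝ) : ℂ) := by
  unfold cgen
  rw [zgen_eq, Complex.inv_eq_conj (Complex.norm_exp_ofReal_mul_I _), Complex.add_conj,
    Complex.exp_ofReal_mul_I_re]

open Real in
lemma zgen_im_pos {p : ℕ} (hp : 2 < p) : 0 < (zgen p).im := by
  rw [zgen_eq, Complex.exp_ofReal_mul_I_im]
  apply Real.sin_pos_of_pos_of_lt_pi
  · positivity
  · rw [div_lt_iff₀ (by positivity)]
    have : (2:ℝ) < p := by exact_mod_cast hp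
    nlinarith [Real.pi_pos]

open IntermediateField in
lemma cgen_mem {p : ℕ} : cgen p ∈ adjoin ℚ ({zgen p} : Set ℂ) := by
  have hz : zgen p ∈ adjoin ℚ ({zgen p} : Set ℂ) := subset_adjoin _ _ rfl
  exact add_mem hz (inv_mem hz)

open IntermediateField in
lemma cgen_root_bound {p : ℕ} (hp : p.Prime) (h2 : 2 < p) {w : ℂ}
    (hw : aeval w (minpoly ℚ (cgen p)) = 0) : w.im = 0 ∧ ‖w‖ < 2 := by
  have hp0 : p ≠ 0 := hp.ne_zero
  have hSi : ∀ s ∈ ({zgen p} : Set ℂ), IsIntegral ℚ s := by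
    rintro s rfl
    exact (zgen_integral hp0).tower_top
  obtain ⟨φ, hφ⟩ := trAux_exists_algHom hSi cgen_mem hw
  have hz : zgen p ∈ adjoin ℚ ({zgen p} : Set ℂ) := subset_adjoin _ _ rfl
  set u : ℂ := φ ⟨zgen p, hz⟩ with hu
  have hup : u ^ p = 1 := by
    have : (⟨zgen p, hz⟩ : adjoin ℚ ({zgen p} : Set ℂ)) ^ p = 1 := by
      ext; push_cast; exact zgen_pow hp0
    rw [hu, ← map_pow, this, map_one]
  have hu1 : u ≠ 1 := by
    intro h
    have h3 : (⟨zgen p, hz⟩ : adjoin ℚ ({zgen p} : Set ℂ)) = 1 :=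
      φ.toRingHom.injective (by simpa using h)
    have h4 : zgen p = 1 := congrArg Subtype.val h3
    have h5 := zgen_im_pos h2
    rw [h4] at h5
    simp at h5
  have huabs : ‖u‖ = 1 := by
    have h1 : (‖u‖) ^ p = 1 := by rw [← norm_pow, hup, norm_one]
    by_contra hne
    rcases lt_or_gt_of_ne hne with h | h
    · have := pow_lt_one₀ (norm_nonneg u) h hp0
      rw [h1] at this; exact lt_irrefl 1 this
    · have := one_lt_pow₀ h hp0
      rw [h1] at this; exact lt_irrefl 1 this
  have hweq : w = ((2 * u.re : ℝ) : ℂ) := by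
    have hc : (⟨cgen p, cgen_mem⟩ : adjoin ℚ ({zgen p} : Set ℂ))
        = ⟨zgen p, hz⟩ + (⟨zgen p, hz⟩)⁻¹ := rfl
    rw [← hφ, hc, map_add, map_inv₀, ← hu, Complex.inv_eq_conj huabs, Complex.add_conj]
  have hsq : u.re * u.re + u.im * u.im = 1 := by
    have h1 := Complex.sq_norm u
    rw [huabs] at h1
    rw [Complex.normSq_apply] at h1
    linarith [h1]
  have hre : |u.re| < 1 := by
    rcases eq_or_ne u.im 0 with him | him
    · exfalso
      have h1 : u.re * u.re = 1 := by rw [him] at hsq; linarith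
      rcases mul_self_eq_one_iff.mp h1 with h | h
      · exact hu1 (Complex.ext (by simp [h]) (by simp [him]))
      · have hun : u = -1 := Complex.ext (by simp [h]) (by simp [him])
        have hodd : Odd p := hp.odd_of_ne_two (by omega)
        rw [hun, hodd.neg_one_pow] at hup
        norm_num at hup
    · have him2 : 0 < u.im * u.im := mul_self_pos.mpr him
      rw [abs_lt]
      constructor <;> nlinarith
  constructor
  · rw [hweq]; simp
  · rw [hweq, Complex.norm_real, Real.norm_eq_abs, abs_mul]
    have : |(2:ℝ)| = 2 := by norm_num
    rw [this]
    linarith [hre]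

lemma cgen_totallyReal {p : ℕ} (hp : p.Prime) (h2 : 2 < p) : IsTotallyRealNum (cgen p) := by
  have h1 : IsIntegral ℚ (cgen p) := (cgen_integral hp.ne_zero).tower_top
  exact ⟨h1.isAlgebraic, fun w hw => (cgen_root_bound hp h2 hw).1⟩

/-! ### Degree computations -/

def realIF : IntermediateField ℚ ℂ :=
  Subfield.toIntermediateField (Complex.ofRealHom : ℝ →+* ℂ).fieldRange
    (fun q => ⟨(q : ℝ), by push_cast; rfl⟩)

lemma mem_realIF {z : ℂ} : z ∈ realIF ↔ z.im = 0 := by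
  have h1 : z ∈ realIF ↔ z ∈ (Complex.ofRealHom : ℝ →+* ℂ).fieldRange := Iff.rfl
  rw [h1, RingHom.mem_fieldRange]
  constructor
  · rintro ⟨r, rfl⟩; simp
  · intro h; exact ⟨z.re, by apply Complex.ext <;> simp [h]⟩

open IntermediateField Module in
lemma finrank_zgen {p : ℕ} (hp : p.Prime) : Module.finrank ℚ ℚ⟮zgen p⟯ = p - 1 := by
  have hz : IsIntegral ℚ (zgen p) := (zgen_integral hp.ne_zero).tower_top
  rw [IntermediateField.adjoin.finrank hz,
    ← Polynomial.cyclotomic_eq_minpoly_rat (zgen_prim hp.ne_zero) hp.pos,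
    Polynomial.natDegree_cyclotomic, Nat.totient_prime hp]

open IntermediateField Module in
lemma finrank_cgen {p : ℕ} (hp : p.Prime) (h2 : 2 < p) :
    2 * Module.finrank ℚ ℚ⟮cgen p⟯ = p - 1 := by
  have hzint : IsIntegral ℚ (zgen p) := (zgen_integral hp.ne_zero).tower_top
  have hcint : IsIntegral ℚ (cgen p) := (cgen_integral hp.ne_zero).tower_top
  set Cf : IntermediateField ℚ ℂ := ℚ⟮cgen p⟯ with hCf
  haveI : FiniteDimensional ℚ Cf := IntermediateField.adjoin.finiteDimensional hcint
  set Z' : IntermediateField Cf ℂ := IntermediateField.adjoin Cf {zgen p} with hZ'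
  have hzC : IsIntegral Cf (zgen p) := hzint.tower_top
  haveI : FiniteDimensional Cf Z' := IntermediateField.adjoin.finiteDimensional hzC
  have hres : Z'.restrictScalars ℚ = ℚ⟮zgen p⟯ := by
    rw [hZ', hCf, show (adjoin (↥ℚ⟮cgen p⟯) {zgen p}).restrictScalars ℚ
      = adjoin ℚ ({cgen p} ∪ {zgen p}) from
      IntermediateField.adjoin_adjoin_left (F := ℚ) (S := {cgen p}) (T := {zgen p})]
    apply le_antisymm
    · apply IntermediateField.adjoin_le_iff.mpr
      rintro x (rfl | rfl)
      · exact cgen_mem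
      · exact subset_adjoin _ _ rfl
    · exact IntermediateField.adjoin.mono _ _ _ (by simp)
  have hCreal : ∀ x : Cf, (x : ℂ).im = 0 := by
    intro x
    have hle : Cf ≤ realIF := by
      rw [hCf]
      apply IntermediateField.adjoin_le_iff.mpr
      rintro y rfl
      rw [SetLike.mem_coe, mem_realIF, cgen_eq]
      exact Complex.ofReal_im _
    exact mem_realIF.mp (hle x.2)
  have hzne : zgen p ∉ Cf := by
    intro hmem
    have := hCreal ⟨zgen p, hmem⟩
    have h5 := zgen_im_pos h2
    simp only at this
    rw [this] at h5
    exact lt_irrefl 0 h5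
  have hs2 : Module.finrank Cf Z' = 2 := by
    have hgen : zgen p ^ 2 - (AdjoinSimple.gen ℚ (cgen p) : ℂ) * zgen p + 1 = 0 := by
      have : (AdjoinSimple.gen ℚ (cgen p) : ℂ) = zgen p + (zgen p)⁻¹ := rfl
      rw [this]
      have h0 : zgen p ≠ 0 := fun h => by
        simpa [h, zero_pow hp.ne_zero] using zgen_pow hp.ne_zero
      field_simp
      ring
    have hle : Module.finrank Cf Z' ≤ 2 := by
      rw [hZ', IntermediateField.adjoin.finrank hzC]
      have hdvd : minpoly Cf (zgen p) ∣
          (X ^ 2 - Polynomial.C (AdjoinSimple.gen ℚ (cgen p)) * X + 1) := by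
        apply minpoly.dvd
        simp only [map_add, map_sub, map_mul, map_pow, map_one, aeval_X, aeval_C]
        rw [show (algebraMap (↥Cf) ℂ) (AdjoinSimple.gen ℚ (cgen p))
          = (AdjoinSimple.gen ℚ (cgen p) : ℂ) from rfl]
        exact hgen
      have hne : (X ^ 2 - Polynomial.C (AdjoinSimple.gen ℚ (cgen p)) * X + 1 :
          Polynomial Cf) ≠ 0 := by
        intro h
        have h4 := congrArg (fun q => Polynomial.coeff q 2) h
        simp only [Polynomial.coeff_add, Polynomial.coeff_sub, Polynomial.coeff_X_pow,
          Polynomial.coeff_zero, Polynomial.coeff_one, Polynomial.coeff_C_mul,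
          Polynomial.coeff_X] at h4
        norm_num at h4
      calc (minpoly Cf (zgen p)).natDegree
          ≤ (X ^ 2 - Polynomial.C (AdjoinSimple.gen ℚ (cgen p)) * X + 1 :
            Polynomial Cf).natDegree := Polynomial.natDegree_le_of_dvd hdvd hne
        _ ≤ 2 := by compute_degree
    have hgt : 1 < Module.finrank Cf Z' := by
      rcases Nat.lt_or_ge 1 (Module.finrank Cf Z') with h | h
      · exact h
      · exfalso
        have hpos : 0 < Module.finrank Cf Z' := Module.finrank_pos
        have h1 : Module.finrank Cf Z' = 1 := by omega
        rw [IntermediateField.finrank_eq_one_iff] at h1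
        have : zgen p ∈ Z' := subset_adjoin _ _ rfl
        rw [h1] at this
        rcases IntermediateField.mem_bot.mp this with ⟨y, hy⟩
        exact hzne (hy ▸ y.2)
    omega
  have htower : Module.finrank ℚ Cf * Module.finrank Cf Z' = Module.finrank ℚ ℚ⟮zgen p⟯ := by
    rw [← hres]
    exact Module.finrank_mul_finrank ℚ Cf Z'
  rw [hs2, finrank_zgen hp] at htower
  omega

/-! ### The key number-theoretic lemma -/

open IntermediateField Module in
lemma trAux_finrank_le_of_le {A B : IntermediateField ℚ ℂ} [FiniteDimensional ℚ B] (h : A ≤ B) :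
    finrank ℚ A ≤ finrank ℚ B :=
  LinearMap.finrank_le_finrank_of_injective (f := (IntermediateField.inclusion h).toLinearMap)
    (fun x y hxy => by
      apply Subtype.ext
      have : ((IntermediateField.inclusion h) x : ℂ) = ((IntermediateField.inclusion h) y : ℂ) :=
        congrArg Subtype.val hxy
      simpa using this)

open IntermediateField Module in
lemma key_nt (M : IntermediateField ℚ ℂ) [FiniteDimensional ℚ M] (B : Finset ℂ)
    (hB : ∀ b ∈ B, IsIntegral ℚ b ∧ b ∉ M) (n : ℕ) :
    ∃ p, n < p ∧ p.Prime ∧ 2 < p ∧ ∀ b ∈ B, b ∉ M ⊔ ℚ⟮cgen p⟯ := by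
  classical
  set D : ℕ := ∏ b ∈ B, finrank ℚ ↥(M ⊔ ℚ⟮b⟯) with hD
  have hDpos : 0 < D := by
    apply Finset.prod_pos
    intro b hb
    haveI := IntermediateField.adjoin.finiteDimensional (hB b hb).1
    haveI : FiniteDimensional ℚ ↥(M ⊔ ℚ⟮b⟯) := IntermediateField.finiteDimensional_sup _ _
    exact finrank_pos
  haveI : NeZero (4 * D) := ⟨by omega⟩
  obtain ⟨p, hpn, hpp, hpmod⟩ :=
    Nat.forall_exists_prime_gt_and_eq_mod (q := 4 * D) (a := -1) isUnit_one.neg (max n 2)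
  have hdvd : 4 * D ∣ p + 1 := by
    have : ((p + 1 : ℕ) : ZMod (4 * D)) = 0 := by push_cast [hpmod]; ring
    exact (ZMod.natCast_eq_zero_iff _ _).mp this
  have h2 : 2 < p := lt_of_le_of_lt (le_max_right n 2) hpn
  refine ⟨p, lt_of_le_of_lt (le_max_left n 2) hpn, hpp, h2, ?_⟩
  intro b hb hmem
  haveI := IntermediateField.adjoin.finiteDimensional (hB b hb).1
  set E : IntermediateField ℚ ℂ := ℚ⟮cgen p⟯ with hE
  set N : IntermediateField ℚ ℂ := M ⊔ ℚ⟮b⟯ with hN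
  haveI : FiniteDimensional ℚ E :=
    IntermediateField.adjoin.finiteDimensional ((cgen_integral hpp.ne_zero).tower_top)
  haveI : FiniteDimensional ℚ N := IntermediateField.finiteDimensional_sup _ _
  set d : ℕ := finrank ℚ N with hd
  set e : ℕ := finrank ℚ E with he
  have hdD : d ∣ D := Finset.dvd_prod_of_mem _ hb
  have he2 : 2 * e = p - 1 := finrank_cgen hpp h2
  have hcop : d.Coprime e := by
    by_contra hnc
    obtain ⟨ℓ, hℓp, hℓd, hℓe⟩ := Nat.Prime.not_coprime_iff_dvd.mp hnc
    have hℓp1 : ℓ ∣ p - 1 := hℓe.trans ⟨2, by omega⟩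
    have hℓq : ℓ ∣ p + 1 := (hℓd.trans (hdD.trans ⟨4, by ring⟩)).trans hdvd
    have hℓ2 : ℓ ∣ 2 := by
      have := Nat.dvd_sub hℓq hℓp1
      have heq : p + 1 - (p - 1) = 2 := by omega
      rwa [heq] at this
    have hℓeq : ℓ = 2 := (Nat.prime_dvd_prime_iff_eq hℓp Nat.prime_two).mp hℓ2
    subst hℓeq
    obtain ⟨k, hk⟩ := hℓe
    have h41 : 4 ∣ p - 1 := ⟨k, by omega⟩
    have h42 : 4 ∣ p + 1 := dvd_trans ⟨D, rfl⟩ hdvd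
    omega
  have hLD : N.LinearDisjoint E := by
    have h1 : N.LinearDisjoint (↥E) := IntermediateField.LinearDisjoint.of_finrank_coprime hcop
    exact h1
  have hsup : finrank ℚ ↥(N ⊔ E) = d * e := hLD.finrank_sup
  have hNE_le : N ⊔ E ≤ M ⊔ E :=
    sup_le (sup_le le_sup_left (adjoin_simple_le_iff.mpr hmem)) le_sup_right
  haveI : FiniteDimensional ℚ ↥(M ⊔ E) := IntermediateField.finiteDimensional_sup _ _
  have h1 : d * e ≤ finrank ℚ ↥(M ⊔ E) := hsup ▸ trAux_finrank_le_of_le hNE_le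
  have h2' : finrank ℚ ↥(M ⊔ E) ≤ finrank ℚ M * e := IntermediateField.finrank_sup_le _ _
  have he0 : 0 < e := finrank_pos
  have hdM : d ≤ finrank ℚ M := Nat.le_of_mul_le_mul_right (le_trans h1 h2') he0
  have hMN : M ≤ N := le_sup_left
  have hMeqN : M = N := IntermediateField.eq_of_le_of_finrank_le hMN hdM
  exact (hB b hb).2 (hMeqN ▸ (le_sup_right (α := IntermediateField ℚ ℂ)
    (mem_adjoin_simple_self ℚ b) : b ∈ N))

end Aux

/-- The set `N'` of totally real fields `K` for which only finitely many algebraic integers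
of `K` have house (maximum absolute value of a conjugate over `ℚ`) less than `2` is meager in
`𝒳` with the constructible topology; in particular the set `N` of totally real fields whose
ring of integers has the Northcott property with respect to the house is meager. -/
theorem stmt_18 :
    IsMeagre {K : TotallyRealFields | {x : ℂ | x ∈ K.1 ∧ IsIntegral ℤ x ∧
        ∀ w : ℂ, aeval w (minpoly ℚ x) = 0 → ‖w‖ < 2}.Finite} ∧
    IsMeagre {K : TotallyRealFields | ∀ r : ℝ, {x : ℂ | x ∈ K.1 ∧ IsIntegral ℤ x ∧
        ∀ w : ℂ, aeval w (minpoly ℚ x) = 0 → ‖w‖ < r}.Finite} := by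
  classical
  set SB : Set (Set TotallyRealFields) :=
    {U : Set TotallyRealFields | ∃ a : ℂ, IsTotallyRealNum a ∧
      (U = {K : TotallyRealFields | a ∈ K.1} ∨ U = {K : TotallyRealFields | a ∉ K.1})} with hSB
  have hTop : (inferInstance : TopologicalSpace TotallyRealFields)
      = TopologicalSpace.generateFrom SB := rfl
  set V : ℕ → Set TotallyRealFields :=
    fun n => {K | ∃ p : ℕ, p.Prime ∧ n < p ∧ 2 < p ∧ cgen p ∈ K.1} with hV
  have hVopen : ∀ n, IsOpen (V n) := by
    intro n
    have : V n = ⋃ p ∈ {p : ℕ | p.Prime ∧ n < p ∧ 2 < p},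
        {K : TotallyRealFields | cgen p ∈ K.1} := by
      ext K
      simp only [hV, Set.mem_setOf_eq, Set.mem_iUnion]
      constructor
      · rintro ⟨p, h1, h2, h3, h4⟩; exact ⟨p, ⟨h1, h2, h3⟩, h4⟩
      · rintro ⟨p, ⟨h1, h2, h3⟩, h4⟩; exact ⟨p, h1, h2, h3, h4⟩
    rw [this]
    apply isOpen_biUnion
    rintro p ⟨hp1, hp2, hp3⟩
    exact TopologicalSpace.isOpen_generateFrom_of_mem
      ⟨cgen p, cgen_totallyReal hp1 hp3, Or.inl rfl⟩
  have hVdense : ∀ n, Dense (V n) := by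
    intro n
    rw [dense_iff_inter_open]
    rintro U hU ⟨K₀, hK₀⟩
    have hbasis := TopologicalSpace.isTopologicalBasis_of_subbasis (s := SB) hTop
    obtain ⟨Bset, hBmem, hK₀B, hBsub⟩ := hbasis.exists_subset_of_mem_open hK₀ hU
    obtain ⟨t, ⟨htfin, htsub⟩, rfl⟩ := hBmem
    have hch : ∀ u ∈ t, ∃ a : ℂ, IsTotallyRealNum a ∧
        (u = {K : TotallyRealFields | a ∈ K.1} ∨ u = {K : TotallyRealFields | a ∉ K.1}) :=
      fun u hu => htsub hu
    choose! g hg1 hg2 using hch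
    have hGfin : (g '' t).Finite := htfin.image g
    set A : Set ℂ := {z ∈ g '' t | z ∈ K₀.1} with hA
    set Bs : Set ℂ := {z ∈ g '' t | z ∉ K₀.1} with hBs
    have hAfin : A.Finite := hGfin.subset (fun z hz => hz.1)
    have hBsfin : Bs.Finite := hGfin.subset (fun z hz => hz.1)
    have hGTR : ∀ z ∈ g '' t, IsTotallyRealNum z := by
      rintro z ⟨u, hu, rfl⟩
      exact hg1 u hu
    have hATR : ∀ z ∈ A, IsTotallyRealNum z := fun z hz => hGTR z hz.1
    haveI : Finite A := hAfin.to_subtype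
    set M : IntermediateField ℚ ℂ := IntermediateField.adjoin ℚ A with hM
    haveI : FiniteDimensional ℚ M :=
      IntermediateField.finiteDimensional_adjoin (fun z hz => ((hATR z hz).1).isIntegral)
    set K₀IF : IntermediateField ℚ ℂ := Subfield.toIntermediateField K₀.1
      (fun q => by
        rw [show algebraMap ℚ ℂ q = (q : ℂ) from eq_ratCast _ q]
        exact SubfieldClass.ratCast_mem _ q) with hK₀IF
    have hMK₀ : M ≤ K₀IF := IntermediateField.adjoin_le_iff.mpr (fun z hz => hz.2)
    have hyp : ∀ b ∈ hBsfin.toFinset, IsIntegral ℚ b ∧ b ∉ M := by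
      intro b hb
      rw [Set.Finite.mem_toFinset] at hb
      refine ⟨((hGTR b hb.1).1).isIntegral, fun hmem => hb.2 (hMK₀ hmem)⟩
    obtain ⟨p, hpn, hpp, hp2, hpb⟩ := key_nt M hBsfin.toFinset hyp n
    have hSTR : ∀ z ∈ A ∪ {cgen p}, IsTotallyRealNum z := by
      rintro z (hz | rfl)
      · exact hATR z hz
      · exact cgen_totallyReal hpp hp2
    set K' : TotallyRealFields :=
      ⟨(IntermediateField.adjoin ℚ (A ∪ {cgen p})).toSubfield,
        fun x => totallyReal_adjoin hSTR _ x.2⟩ with hK'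
    have hK'le : (IntermediateField.adjoin ℚ (A ∪ {cgen p}))
        ≤ M ⊔ IntermediateField.adjoin ℚ {cgen p} := by
      apply IntermediateField.adjoin_le_iff.mpr
      rintro z (hz | rfl)
      · exact le_sup_left (α := IntermediateField ℚ ℂ) (IntermediateField.subset_adjoin _ _ hz)
      · exact le_sup_right (α := IntermediateField ℚ ℂ)
          (IntermediateField.mem_adjoin_simple_self ℚ _)
    refine ⟨K', hBsub ?_, ?_⟩
    · intro u hu
      have hK₀u : K₀ ∈ u := hK₀B u hu
      rcases hg2 u hu with hcase | hcase
      · rw [hcase] at hK₀u ⊢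
        have : g u ∈ A := ⟨Set.mem_image_of_mem g hu, hK₀u⟩
        exact IntermediateField.subset_adjoin _ _ (Or.inl this)
      · rw [hcase] at hK₀u ⊢
        have hgu : g u ∈ Bs := ⟨Set.mem_image_of_mem g hu, hK₀u⟩
        intro hmem
        exact hpb (g u) (hBsfin.mem_toFinset.mpr hgu) (hK'le hmem)
    · exact ⟨p, hpp, hpn, hp2, IntermediateField.subset_adjoin _ _ (Or.inr rfl)⟩
  have hmeagre1 : IsMeagre {K : TotallyRealFields | {x : ℂ | x ∈ K.1 ∧ IsIntegral ℤ x ∧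
      ∀ w : ℂ, aeval w (minpoly ℚ x) = 0 → ‖w‖ < 2}.Finite} := by
    rw [isMeagre_iff_countable_union_isNowhereDense]
    refine ⟨Set.range (fun n => (V n)ᶜ), ?_, Set.countable_range _, ?_⟩
    · rintro s ⟨n, rfl⟩
      rw [IsClosed.isNowhereDense_iff (hVopen n).isClosed_compl, interior_compl,
        (hVdense n).closure_eq, Set.compl_univ]
    · intro K hK
      simp only [Set.mem_setOf_eq] at hK
      by_contra hnot
      simp only [Set.mem_sUnion, Set.mem_range, not_exists] at hnot
      have hallV : ∀ n, K ∈ V n := by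
        intro m
        by_contra hm
        exact hnot ((V m)ᶜ) ⟨⟨m, rfl⟩, hm⟩
      set PK : Set ℕ := {p | p.Prime ∧ 2 < p ∧ cgen p ∈ K.1} with hPK
      have hinf : PK.Infinite := by
        intro hfin
        obtain ⟨m, hm⟩ := hfin.bddAbove
        obtain ⟨p, hp1, hp2, hp3, hp4⟩ := hallV m
        exact absurd (hm ⟨hp1, hp3, hp4⟩) (not_le.mpr hp2)
      have hinj : Set.InjOn cgen PK := by
        intro a ha b hb hab
        have ha3 : 2 < a := ha.2.1
        have hb3 : 2 < b := hb.2.1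
        rw [cgen_eq, cgen_eq] at hab
        have hab' : 2 * Real.cos (2 * Real.pi / a) = 2 * Real.cos (2 * Real.pi / b) := by
          exact_mod_cast hab
        have hcos : Real.cos (2 * Real.pi / a) = Real.cos (2 * Real.pi / b) := by linarith
        have hmem : ∀ c : ℕ, 2 < c → 2 * Real.pi / c ∈ Set.Icc 0 Real.pi := by
          intro c hc
          constructor
          · positivity
          · rw [div_le_iff₀ (by exact_mod_cast (by omega : 0 < c))]
            have : (2:ℝ) ≤ c := by exact_mod_cast (by omega : 2 ≤ c)
            nlinarith [Real.pi_pos]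
        have hthis := Real.injOn_cos (hmem a ha3) (hmem b hb3) hcos
        have hane : (a:ℝ) ≠ 0 := by exact_mod_cast (by omega : a ≠ 0)
        have hbne : (b:ℝ) ≠ 0 := by exact_mod_cast (by omega : b ≠ 0)
        rw [div_eq_div_iff hane hbne] at hthis
        have h2π : (2:ℝ) * Real.pi ≠ 0 := by positivity
        have := mul_left_cancel₀ h2π hthis
        exact_mod_cast this.symm
      have himg : cgen '' PK ⊆ {x : ℂ | x ∈ K.1 ∧ IsIntegral ℤ x ∧
          ∀ w : ℂ, aeval w (minpoly ℚ x) = 0 → ‖w‖ < 2} := by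
        rintro x ⟨p, ⟨hp1, hp2, hp3⟩, rfl⟩
        exact ⟨hp3, cgen_integral hp1.ne_zero, fun w hw => (cgen_root_bound hp1 hp2 hw).2⟩
      exact (hinf.image hinj) (hK.subset himg)
  refine ⟨hmeagre1, hmeagre1.mono ?_⟩
  intro K hK
  exact hK 2

end
end
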